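/- arXiv:1404.3951 — 8 statements merged into one kernel-verified Lean document; each statement's English description precedes it below -/
import Mathlib

section
/- For every c ∈ [0,1], the maximally obese state ρ_c has CHSH value β(ρ_c) = 2√(2(1−c)). -/
open Matrix Kronecker ComplexOrder

noncomputable section

/-- Pauli matrix σ₁. -/
def σ1 : Matrix (Fin 2) (Fin 2) ℂ := !![0, 1; 1, 0]
/-- Pauli matrix σ₂. -/
def σ2 : Matrix (Fin 2) (Fin 2) ℂ := !![0, -Complex.I; Complex.I, 0]
/-- Pauli matrix σ₃. -/
def σ3 : Matrix (Fin 2) (Fin 2) ℂ := !![1, 0; 0, -1]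

/-- The three Pauli matrices. -/
def pauli : Fin 3 → Matrix (Fin 2) (Fin 2) ℂ := ![σ1, σ2, σ3]

/-- `v · σ = v₁σ₁ + v₂σ₂ + v₃σ₃`. -/
def dotSigma (v : Fin 3 → ℝ) : Matrix (Fin 2) (Fin 2) ℂ := ∑ i, (v i : ℂ) • pauli i

/-- A two-qubit state: positive semidefinite with trace 1. -/
def IsTwoQubitState (ρ : Matrix (Fin 2 × Fin 2) (Fin 2 × Fin 2) ℂ) : Prop :=
  ρ.PosSemidef ∧ ρ.trace = 1

/-- Bob's marginal `tr_A ρ`. -/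
def traceA (ρ : Matrix (Fin 2 × Fin 2) (Fin 2 × Fin 2) ℂ) : Matrix (Fin 2) (Fin 2) ℂ :=
  Matrix.of fun b b' => ∑ a, ρ (a, b) (a, b')

/-- Alice's marginal `tr_B ρ`. -/
def traceB (ρ : Matrix (Fin 2 × Fin 2) (Fin 2 × Fin 2) ℂ) : Matrix (Fin 2) (Fin 2) ℂ :=
  Matrix.of fun a a' => ∑ b, ρ (a, b) (a', b)

/-- A canonical state: Bob's marginal is maximally mixed. -/
def IsCanonical (ρ : Matrix (Fin 2 × Fin 2) (Fin 2 × Fin 2) ℂ) : Prop :=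
  IsTwoQubitState ρ ∧ traceA ρ = (1 / 2 : ℂ) • 1

/-- Alice's Bloch vector: `c_i = Re tr(ρ (σ_i ⊗ I))`. -/
def blochA (ρ : Matrix (Fin 2 × Fin 2) (Fin 2 × Fin 2) ℂ) (i : Fin 3) : ℝ :=
  (Matrix.trace (ρ * (pauli i ⊗ₖ (1 : Matrix (Fin 2) (Fin 2) ℂ)))).re

/-- Euclidean norm of Alice's Bloch vector. -/
def blochNormA (ρ : Matrix (Fin 2 × Fin 2) (Fin 2 × Fin 2) ℂ) : ℝ :=
  Real.sqrt (∑ i, blochA ρ i ^ 2)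

/-- A unit vector in ℝ³. -/
def IsUnitVec3 (v : Fin 3 → ℝ) : Prop := ∑ i, v i ^ 2 = 1

/-- The CHSH Bell operator. -/
def chshOp (a a' b b' : Fin 3 → ℝ) : Matrix (Fin 2 × Fin 2) (Fin 2 × Fin 2) ℂ :=
  dotSigma a ⊗ₖ dotSigma (b + b') + dotSigma a' ⊗ₖ dotSigma (b - b')

/-- Maximal CHSH value `β(ρ)`. -/
def chshValue (ρ : Matrix (Fin 2 × Fin 2) (Fin 2 × Fin 2) ℂ) : ℝ :=
  sSup { x : ℝ | ∃ a a' b b' : Fin 3 → ℝ,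
    IsUnitVec3 a ∧ IsUnitVec3 a' ∧ IsUnitVec3 b ∧ IsUnitVec3 b' ∧
    x = |(Matrix.trace (ρ * chshOp a a' b b')).re| }

/-- The maximally obese state `ρ_c` in the ordered basis `|00⟩,|01⟩,|10⟩,|11⟩`. -/
def rhoMax (c : ℝ) : Matrix (Fin 2 × Fin 2) (Fin 2 × Fin 2) ℂ :=
  Matrix.of fun p q =>
    if p = (0, 0) ∧ q = (0, 0) then (c : ℂ) / 2
    else if p = (0, 1) ∧ q = (0, 1) then (1 / 2 : ℂ)
    else if p = (1, 0) ∧ q = (1, 0) then (1 - (c : ℂ)) / 2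
    else if (p = (0, 1) ∧ q = (1, 0)) ∨ (p = (1, 0) ∧ q = (0, 1)) then
      (Real.sqrt (1 - c) : ℂ) / 2
    else 0

/-- Symmetric extendibility with respect to Alice. -/
def SymExtendible (ρ : Matrix (Fin 2 × Fin 2) (Fin 2 × Fin 2) ℂ) : Prop :=
  ∃ τ : Matrix (Fin 2 × Fin 2 × Fin 2) (Fin 2 × Fin 2 × Fin 2) ℂ,
    τ.PosSemidef ∧
    (∀ a a' b b' : Fin 2, (∑ x, τ (a, x, b) (a', x, b')) = ρ (a, b) (a', b')) ∧
    (∀ a a' b b' : Fin 2, (∑ x, τ (x, a, b) (x, a', b')) = ρ (a, b) (a', b'))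

/-- A maximally entangled two-qubit pure state: a unit vector whose Alice marginal is I/2. -/
def IsMaxEntangled (φ : Fin 2 × Fin 2 → ℂ) : Prop :=
  (∑ p, Complex.normSq (φ p)) = 1 ∧
  ∀ a a' : Fin 2, (∑ b, φ (a, b) * star (φ (a', b))) = if a = a' then (1 / 2 : ℂ) else 0

/-- Fully entangled fraction `f(ρ)`. -/
def fef (ρ : Matrix (Fin 2 × Fin 2) (Fin 2 × Fin 2) ℂ) : ℝ :=
  sSup { x : ℝ | ∃ φ : Fin 2 × Fin 2 → ℂ, IsMaxEntangled φ ∧ x = (star φ ⬝ᵥ ρ.mulVec φ).re }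

/-- Partial transpose on Bob's system. -/
def ptB (ρ : Matrix (Fin 2 × Fin 2) (Fin 2 × Fin 2) ℂ) :
    Matrix (Fin 2 × Fin 2) (Fin 2 × Fin 2) ℂ :=
  Matrix.of fun p q => ρ (p.1, q.2) (q.1, p.2)

/-- The spin-flipped state `ρ̂ = (σ₂⊗σ₂) ρ* (σ₂⊗σ₂)`. -/
def spinFlip (ρ : Matrix (Fin 2 × Fin 2) (Fin 2 × Fin 2) ℂ) :
    Matrix (Fin 2 × Fin 2) (Fin 2 × Fin 2) ℂ :=
  (σ2 ⊗ₖ σ2) * ρ.map star * (σ2 ⊗ₖ σ2)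

/-- Correlation matrix `T_ij = Re tr(ρ (σ_i ⊗ σ_j))`. -/
def corrT (ρ : Matrix (Fin 2 × Fin 2) (Fin 2 × Fin 2) ℂ) : Matrix (Fin 3) (Fin 3) ℝ :=
  Matrix.of fun i j => (Matrix.trace (ρ * (pauli i ⊗ₖ pauli j))).re

lemma key (c : ℝ) (u v : Fin 3 → ℝ) :
    (Matrix.trace (rhoMax c * (dotSigma u ⊗ₖ dotSigma v))).re
    = Real.sqrt (1-c) * (u 0 * v 0 + u 1 * v 1) + (c - 1) * (u 2 * v 2) := by
  simp only [Matrix.trace, Matrix.diag, Matrix.mul_apply, Fintype.sum_prod_type,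
    Fin.sum_univ_two, rhoMax, dotSigma, pauli, Fin.sum_univ_three, σ1, σ2, σ3,
    Matrix.kroneckerMap_apply, Matrix.of_apply, Matrix.smul_apply,
    Matrix.cons_val', Matrix.cons_val_zero, Matrix.cons_val_one, Matrix.head_cons,
    Matrix.head_fin_const, Matrix.empty_val', Matrix.cons_val_fin_one,
    Matrix.add_apply, smul_eq_mul, Prod.mk.injEq, Matrix.cons_val_two, Matrix.tail_cons]
  norm_num [Complex.ext_iff]
  ring

lemma key2 (c : ℝ) (a a' b b' : Fin 3 → ℝ) :
    (Matrix.trace (rhoMax c * chshOp a a' b b')).re =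
    (Real.sqrt (1-c) * (a 0 * (b 0 + b' 0) + a 1 * (b 1 + b' 1)) + (c-1) * (a 2 * (b 2 + b' 2)))
    + (Real.sqrt (1-c) * (a' 0 * (b 0 - b' 0) + a' 1 * (b 1 - b' 1)) + (c-1) * (a' 2 * (b 2 - b' 2))) := by
  rw [chshOp, Matrix.mul_add, Matrix.trace_add, Complex.add_re, key, key]
  simp [Pi.add_apply, Pi.sub_apply]

lemma cs3 (x0 x1 x2 y0 y1 y2 : ℝ) (h : x0^2+x1^2+x2^2 = 1) :
    (x0*y0+x1*y1+x2*y2)^2 ≤ y0^2+y1^2+y2^2 := by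
  nlinarith [sq_nonneg (x0*y1-x1*y0), sq_nonneg (x0*y2-x2*y0), sq_nonneg (x1*y2-x2*y1),
    sq_nonneg (x0*y0+x1*y1+x2*y2)]


lemma P2 (c s x0 x1 x2 u0 u1 u2 : ℝ) (hx : x0^2+x1^2+x2^2 = 1)
    (hs2 : s^2 = 1-c) (hc0 : 0 ≤ c) (hc1 : c ≤ 1) :
    (s*(x0*u0+x1*u1)+(c-1)*(x2*u2))^2 ≤ (1-c)*(u0^2+u1^2+u2^2) := by
  have h := cs3 x0 x1 x2 (s*u0) (s*u1) ((c-1)*u2) hx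
  have h' : (s*(x0*u0+x1*u1)+(c-1)*(x2*u2))^2
      ≤ (1-c)*u0^2+(1-c)*u1^2+(1-c)^2*u2^2 := by
    calc (s*(x0*u0+x1*u1)+(c-1)*(x2*u2))^2
        = (x0*(s*u0)+x1*(s*u1)+x2*((c-1)*u2))^2 := by ring
      _ ≤ (s*u0)^2+(s*u1)^2+((c-1)*u2)^2 := h
      _ = (1-c)*u0^2+(1-c)*u1^2+(1-c)^2*u2^2 := by
          rw [mul_pow, mul_pow, mul_pow, hs2]; ring
  have hsc : (1-c)^2 ≤ 1-c := by nlinarith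
  have h2 : (1-c)^2*u2^2 ≤ (1-c)*u2^2 := mul_le_mul_of_nonneg_right hsc (sq_nonneg u2)
  nlinarith [h', h2]

lemma sum_bound (P Q U V t : ℝ) (ht : 0 ≤ t) (hP : P^2 ≤ t*U) (hQ : Q^2 ≤ t*V)
    (hUV : U + V = 4) : (P+Q)^2 ≤ 8*t := by
  have h4 : t*U + t*V = 4*t := by linear_combination t * hUV
  nlinarith [sq_nonneg (P-Q)]

lemma bound_real (c s : ℝ) (hc0 : 0 ≤ c) (hc1 : c ≤ 1) (hs2 : s^2 = 1-c)
    (a0 a1 a2 a0' a1' a2' b0 b1 b2 b0' b1' b2' : ℝ)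
    (ha : a0^2+a1^2+a2^2 = 1) (ha' : a0'^2+a1'^2+a2'^2 = 1)
    (hb : b0^2+b1^2+b2^2 = 1) (hb' : b0'^2+b1'^2+b2'^2 = 1) :
    |(s * (a0 * (b0 + b0') + a1 * (b1 + b1')) + (c-1) * (a2 * (b2 + b2')))
    + (s * (a0' * (b0 - b0') + a1' * (b1 - b1')) + (c-1) * (a2' * (b2 - b2')))|
    ≤ 2 * Real.sqrt (2 * (1 - c)) := by
  have hPsq := P2 c s a0 a1 a2 (b0+b0') (b1+b1') (b2+b2') ha hs2 hc0 hc1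
  have hQsq := P2 c s a0' a1' a2' (b0-b0') (b1-b1') (b2-b2') ha' hs2 hc0 hc1
  have hUV : ((b0+b0')^2+(b1+b1')^2+(b2+b2')^2) + ((b0-b0')^2+(b1-b1')^2+(b2-b2')^2) = 4 := by
    linear_combination 2*hb + 2*hb'
  have hsum := sum_bound _ _ _ _ _ (by linarith : (0:ℝ) ≤ 1 - c) hPsq hQsq hUV
  set P := s * (a0 * (b0 + b0') + a1 * (b1 + b1')) + (c-1) * (a2 * (b2 + b2')) with hPdef
  set Q := s * (a0' * (b0 - b0') + a1' * (b1 - b1')) + (c-1) * (a2' * (b2 - b2')) with hQdef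
  calc |P + Q| = Real.sqrt ((P+Q)^2) := (Real.sqrt_sq_eq_abs _).symm
    _ ≤ Real.sqrt (8 * (1 - c)) := Real.sqrt_le_sqrt hsum
    _ = 2 * Real.sqrt (2 * (1 - c)) := by
        rw [show (8:ℝ) * (1 - c) = 2^2 * (2 * (1 - c)) by ring,
          Real.sqrt_mul (by positivity), Real.sqrt_sq (by norm_num)]

lemma bound (c : ℝ) (hc : c ∈ Set.Icc (0:ℝ) 1) (a a' b b' : Fin 3 → ℝ)
    (ha : IsUnitVec3 a) (ha' : IsUnitVec3 a') (hb : IsUnitVec3 b) (hb' : IsUnitVec3 b') :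
    |(Matrix.trace (rhoMax c * chshOp a a' b b')).re| ≤ 2 * Real.sqrt (2 * (1 - c)) := by
  obtain ⟨hc0, hc1⟩ := hc
  simp only [IsUnitVec3, Fin.sum_univ_three] at ha ha' hb hb'
  rw [key2]
  exact bound_real c (Real.sqrt (1-c)) hc0 hc1 (Real.sq_sqrt (by linarith))
    (a 0) (a 1) (a 2) (a' 0) (a' 1) (a' 2) (b 0) (b 1) (b 2) (b' 0) (b' 1) (b' 2)
    ha ha' hb hb'


lemma unit_aw : IsUnitVec3 ![Real.sqrt 2/2, Real.sqrt 2/2, 0] := by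
  norm_num [IsUnitVec3, Fin.sum_univ_three, div_pow, Real.sq_sqrt, Matrix.cons_val_two]

lemma unit_aw' : IsUnitVec3 ![Real.sqrt 2/2, -(Real.sqrt 2/2), 0] := by
  norm_num [IsUnitVec3, Fin.sum_univ_three, div_pow, Real.sq_sqrt, Matrix.cons_val_two]

lemma unit_bw : IsUnitVec3 ![1, 0, 0] := by
  norm_num [IsUnitVec3, Fin.sum_univ_three, Matrix.cons_val_two]

lemma unit_bw' : IsUnitVec3 ![0, 1, 0] := by
  norm_num [IsUnitVec3, Fin.sum_univ_three, Matrix.cons_val_two]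

lemma hval (c : ℝ) :
    (Matrix.trace (rhoMax c * chshOp ![Real.sqrt 2/2, Real.sqrt 2/2, 0]
      ![Real.sqrt 2/2, -(Real.sqrt 2/2), 0] ![1, 0, 0] ![0, 1, 0])).re
    = 2 * Real.sqrt (2 * (1 - c)) := by
  rw [key2]
  rw [Real.sqrt_mul (by norm_num : (0:ℝ) ≤ 2) (1 - c)]
  norm_num [Matrix.cons_val_two]
  ring


/-- For every `c ∈ [0,1]`, the maximally obese state has
CHSH value `β(ρ_c) = 2√(2(1−c))`. -/
theorem chsh_rhoMax (c : ℝ) (hc : c ∈ Set.Icc (0 : ℝ) 1) :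
    chshValue (rhoMax c) = 2 * Real.sqrt (2 * (1 - c)) := by
  have hmem : 2 * Real.sqrt (2 * (1 - c)) ∈ { x : ℝ | ∃ a a' b b' : Fin 3 → ℝ,
      IsUnitVec3 a ∧ IsUnitVec3 a' ∧ IsUnitVec3 b ∧ IsUnitVec3 b' ∧
      x = |(Matrix.trace (rhoMax c * chshOp a a' b b')).re| } :=
    ⟨_, _, _, _, unit_aw, unit_aw', unit_bw, unit_bw',
      by rw [hval c, abs_of_nonneg (by positivity)]⟩
  unfold chshValue
  apply le_antisymm
  · refine csSup_le ⟨_, hmem⟩ ?_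
    rintro x ⟨a, a', b, b', h1, h2, h3, h4, rfl⟩
    exact bound c hc a a' b b' h1 h2 h3 h4
  · refine le_csSup ⟨2 * Real.sqrt (2 * (1 - c)), ?_⟩ hmem
    rintro x ⟨a, a', b, b', h1, h2, h3, h4, rfl⟩
    exact bound c hc a a' b b' h1 h2 h3 h4
end
end

section
/- Let c, s1, s2, s3 be real numbers with 0 ≤ c ≤ 1 and 0 ≤ s3 ≤ s2 ≤ s1 ≤ 1. If c² + s1² + s2² + s3² ≤ 1 + 2·s1·s2·s3, then s1² + s2² ≤ 2(1−c). -/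
open Matrix Kronecker ComplexOrder

noncomputable section

/-- The algebraic core of Theorem 1: the physicality constraint
forces `s₁² + s₂² ≤ 2(1−c)`. -/
theorem semiaxes_sq_sum_le (c s1 s2 s3 : ℝ)
    (hc0 : 0 ≤ c) (hc1 : c ≤ 1)
    (h30 : 0 ≤ s3) (h32 : s3 ≤ s2) (h21 : s2 ≤ s1) (h11 : s1 ≤ 1)
    (hphys : c ^ 2 + s1 ^ 2 + s2 ^ 2 + s3 ^ 2 ≤ 1 + 2 * s1 * s2 * s3) :
    s1 ^ 2 + s2 ^ 2 ≤ 2 * (1 - c) := by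
  have h31 : s3 ≤ 1 := (h32.trans h21).trans h11
  rcases lt_or_eq_of_le h31 with h | h
  · -- s3 < 1
    have key : (1 - s3) * (s1 ^ 2 + s2 ^ 2) ≤ 2 * (1 - c) * (1 - s3) := by
      nlinarith [mul_nonneg h30 (sq_nonneg (s1 - s2)), sq_nonneg (s3 - (1 - c))]
    have h1 : 0 < 1 - s3 := by linarith
    nlinarith [key, h1]
  · -- s3 = 1, so s1 = s2 = 1, forcing c = 0
    have hs2 : s2 = 1 := le_antisymm (h21.trans h11) (h ▸ h32)
    have hs1 : s1 = 1 := le_antisymm h11 (hs2 ▸ h21)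
    subst hs1; subst hs2; rw [← h] at hphys
    have : c = 0 := by nlinarith [sq_nonneg c]
    rw [this]; norm_num
end
end

section
/- For c ∈ [0,1], the maximally obese state ρ_c is symmetrically extendible with respect to Alice if and only if c ≥ 1/2. -/
open Matrix Kronecker ComplexOrder

noncomputable section

section AuxSymExt

lemma outer_posSemidef' {n : Type*} [Fintype n] (v : n → ℂ) :
    (Matrix.of fun p q => v p * star (v q) : Matrix n n ℂ).PosSemidef := by
  refine Matrix.PosSemidef.of_dotProduct_mulVec_nonneg ?_ ?_
  · ext p q
    simp [Matrix.conjTranspose_apply, mul_comm]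
  · intro x
    have h : (star x) ⬝ᵥ ((Matrix.of fun p q => v p * star (v q)) *ᵥ x)
        = star (∑ q, star (v q) * x q) * (∑ q, star (v q) * x q) := by
      simp only [Matrix.mulVec, dotProduct, Matrix.of_apply, star_sum, StarMul.star_mul,
        star_star, Pi.star_apply, Finset.sum_mul, Finset.mul_sum]
      rw [Finset.sum_comm]
      exact Finset.sum_congr rfl fun p _ => Finset.sum_congr rfl fun q _ => by ring
    rw [h]
    exact star_mul_self_nonneg _

lemma psd_diag_nonneg' {n : Type*} [Fintype n] [DecidableEq n]
    {M : Matrix n n ℂ} (h : M.PosSemidef) (p : n) : 0 ≤ M p p := by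
  have := h.dotProduct_mulVec_nonneg (Pi.single p 1)
  simpa [Matrix.mulVec, dotProduct, Pi.single_apply] using this

lemma psd_entry_zero_of_diag_zero' {n : Type*} [Fintype n] [DecidableEq n]
    {M : Matrix n n ℂ} (h : M.PosSemidef) {p : n} (hp : M p p = 0) (q : n) : M p q = 0 := by
  obtain ⟨B, rfl⟩ : ∃ B : Matrix n n ℂ, M = Bᴴ * B := by
    open scoped MatrixOrder in
    obtain ⟨B, hB⟩ := CStarAlgebra.nonneg_iff_eq_star_mul_self.mp h.nonneg
    exact ⟨B, by rw [hB, Matrix.star_eq_conjTranspose]⟩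
  have hsum : (∑ k, star (B k p) * B k p) = 0 := by
    simpa [Matrix.mul_apply, Matrix.conjTranspose_apply] using hp
  have hB : ∀ k, B k p = 0 := fun k => by
    have h0 := (Finset.sum_eq_zero_iff_of_nonneg
      (fun k _ => star_mul_self_nonneg (B k p))).mp hsum k (Finset.mem_univ k)
    have : (Complex.normSq (B k p) : ℂ) = 0 := by
      rw [Complex.normSq_eq_conj_mul_self]; exact h0
    exact Complex.normSq_eq_zero.mp (by exact_mod_cast this)
  simp [Matrix.mul_apply, Matrix.conjTranspose_apply, hB]

end AuxSymExt

/-- `ρ_c` is symmetrically extendible w.r.t. Alice iff `c ≥ 1/2`. -/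
theorem rhoMax_symExtendible_iff (c : ℝ) (hc : c ∈ Set.Icc (0 : ℝ) 1) :
    SymExtendible (rhoMax c) ↔ 1 / 2 ≤ c := by
  obtain ⟨hc0, hc1⟩ := hc
  have h1c : (0:ℝ) ≤ 1 - c := by linarith
  have hS2 : (Real.sqrt (1 - c)) * (Real.sqrt (1 - c)) = 1 - c := Real.mul_self_sqrt h1c
  constructor
  · rintro ⟨τ, hpsd, hm1, hm2⟩
    have hz : ∀ z w : ℂ, 0 ≤ z → 0 ≤ w → z + w = 0 → z = 0 ∧ w = 0 := by
      intro z w hzz hww hsum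
      constructor
      · refine le_antisymm ?_ hzz
        calc z ≤ z + w := le_add_of_nonneg_right hww
        _ = 0 := hsum
      · refine le_antisymm ?_ hww
        calc w ≤ z + w := le_add_of_nonneg_left hzz
        _ = 0 := hsum
    have hr1111 : rhoMax c (1,1) (1,1) = 0 := by
      simp (config := { decide := true }) only [rhoMax, Matrix.of_apply, if_true, if_false]
    have hr0110 : rhoMax c (0,1) (1,0) = (((Real.sqrt (1 - c))/2 : ℝ) : ℂ) := by
      simp (config := { decide := true }) only [rhoMax, Matrix.of_apply, if_true, if_false]
      push_cast; ring
    have hr0101 : rhoMax c (0,1) (0,1) = ((1/2 : ℝ) : ℂ) := by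
      simp (config := { decide := true }) only [rhoMax, Matrix.of_apply, if_true, if_false]
      push_cast; ring
    have hr1010 : rhoMax c (1,0) (1,0) = (((1-c)/2 : ℝ) : ℂ) := by
      simp (config := { decide := true }) only [rhoMax, Matrix.of_apply, if_true, if_false]
      push_cast; ring
    have hr0000 : rhoMax c (0,0) (0,0) = ((c/2 : ℝ) : ℂ) := by
      simp (config := { decide := true }) only [rhoMax, Matrix.of_apply, if_true, if_false]
      push_cast; ring
    have s1 := hm1 1 1 1 1
    rw [Fin.sum_univ_two, hr1111] at s1
    obtain ⟨h101, h111⟩ := hz _ _ (psd_diag_nonneg' hpsd _) (psd_diag_nonneg' hpsd _) s1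
    have s2 := hm2 1 1 1 1
    rw [Fin.sum_univ_two, hr1111] at s2
    obtain ⟨h011, -⟩ := hz _ _ (psd_diag_nonneg' hpsd _) (psd_diag_nonneg' hpsd _) s2
    have hrow : τ (0,1,1) (1,1,0) = 0 := psd_entry_zero_of_diag_zero' hpsd h011 _
    have s3 := hm1 0 1 1 0
    rw [Fin.sum_univ_two, hr0110] at s3
    rw [hrow, add_zero] at s3
    have s3' : τ (1,0,0) (0,0,1) = (((Real.sqrt (1 - c))/2 : ℝ) : ℂ) := by
      have := congrFun (congrFun hpsd.1 (1,0,0)) (0,0,1)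
      rw [Matrix.conjTranspose_apply] at this
      rw [← this, s3]
      simp [Complex.star_def, Complex.conj_ofReal]
    have s4 := hm2 0 0 1 1
    rw [Fin.sum_univ_two, hr0101] at s4
    rw [h101, add_zero] at s4
    set v : Fin 2 × Fin 2 × Fin 2 → ℂ :=
      fun p => if p = (0,0,1) then ((Real.sqrt (1 - c)) : ℂ) else if p = (1,0,0) then -1 else 0 with hv
    have hq := hpsd.dotProduct_mulVec_nonneg v
    have hqv : star v ⬝ᵥ τ *ᵥ v
        = ((Real.sqrt (1 - c)):ℂ)*((Real.sqrt (1 - c)):ℂ)*τ (0,0,1) (0,0,1) - ((Real.sqrt (1 - c)):ℂ)*τ (0,0,1) (1,0,0)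
          - ((Real.sqrt (1 - c)):ℂ)*τ (1,0,0) (0,0,1) + τ (1,0,0) (1,0,0) := by
      simp (config := { decide := true }) only [hv, dotProduct, Matrix.mulVec,
        Fintype.sum_prod_type, Fin.sum_univ_two, Pi.star_apply, if_true, if_false,
        Complex.star_def, Complex.conj_ofReal, map_neg, map_zero, _root_.map_one]
      ring
    rw [hqv, s3, s3', s4] at hq
    have hq' : 0 ≤ (Real.sqrt (1 - c))*(Real.sqrt (1 - c))*(1/2) - (Real.sqrt (1 - c))*((Real.sqrt (1 - c))/2) - (Real.sqrt (1 - c))*((Real.sqrt (1 - c))/2) + (τ (1,0,0) (1,0,0)).re := by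
      have := (Complex.le_def.mp hq).1
      simpa using this
    have s5 := hm1 1 1 0 0
    rw [Fin.sum_univ_two, hr1010] at s5
    have s6 := hm2 1 1 0 0
    rw [Fin.sum_univ_two, hr1010] at s6
    have s7 := hm1 0 0 0 0
    rw [Fin.sum_univ_two, hr0000] at s7
    have r5 := congrArg Complex.re s5
    have r6 := congrArg Complex.re s6
    have r7 := congrArg Complex.re s7
    simp only [Complex.add_re, Complex.ofReal_re] at r5 r6 r7
    have d000 : 0 ≤ (τ (0,0,0) (0,0,0)).re := (Complex.le_def.mp (psd_diag_nonneg' hpsd _)).1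
    have d110 : 0 ≤ (τ (1,1,0) (1,1,0)).re := (Complex.le_def.mp (psd_diag_nonneg' hpsd _)).1
    nlinarith [hq', r5, r6, r7, d000, d110, hS2]
  · intro hhalf
    have hch : (0:ℝ) ≤ c - 1/2 := by linarith
    have hA2 : (Real.sqrt (c - 1/2)) * (Real.sqrt (c - 1/2)) = c - 1/2 := Real.mul_self_sqrt hch
    have hT2 : (Real.sqrt (1/2)) * (Real.sqrt (1/2)) = 1/2 := Real.mul_self_sqrt (by norm_num)
    have hS2c : ((Real.sqrt (1 - c)):ℂ) * ((Real.sqrt (1 - c)):ℂ) = 1 - (c:ℂ) := by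
      rw [← Complex.ofReal_mul, hS2]; push_cast; ring
    have hT2c : ((Real.sqrt (1/2)):ℂ) * ((Real.sqrt (1/2)):ℂ) = (1/2 : ℂ) := by
      rw [← Complex.ofReal_mul, hT2]; push_cast; ring
    have hA2c : ((Real.sqrt (c - 1/2)):ℂ) * ((Real.sqrt (c - 1/2)):ℂ) = (c:ℂ) - 1/2 := by
      rw [← Complex.ofReal_mul, hA2]; push_cast; ring
    set u : Fin 2 × Fin 2 × Fin 2 → ℂ :=
      fun p => if p = (0,0,0) then ((Real.sqrt (c - 1/2)) : ℂ) else 0 with hu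
    set w : Fin 2 × Fin 2 × Fin 2 → ℂ :=
      fun p => if p = (0,0,1) then ((Real.sqrt (1/2)) : ℂ)
        else if p = (0,1,0) then ((Real.sqrt (1/2)) : ℂ) * ((Real.sqrt (1 - c)) : ℂ)
        else if p = (1,0,0) then ((Real.sqrt (1/2)) : ℂ) * ((Real.sqrt (1 - c)) : ℂ) else 0 with hw
    refine ⟨(Matrix.of fun p q => u p * star (u q)) + (Matrix.of fun p q => w p * star (w q)),
      (outer_posSemidef' u).add (outer_posSemidef' w), ?_, ?_⟩ <;>
    · intro a a' b b'
      fin_cases a <;> fin_cases a' <;> fin_cases b <;> fin_cases b' <;>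
        simp (config := { decide := true }) only [hu, hw, Matrix.add_apply, Matrix.of_apply,
          Fin.sum_univ_two, rhoMax, if_true, if_false, Complex.star_def, Complex.conj_ofReal,
          map_zero, _root_.map_one, _root_.map_mul, mul_zero, zero_mul, add_zero, zero_add] <;>
        first
        | ring1
        | linear_combination hT2c
        | linear_combination (-1 : ℂ) * hT2c
        | linear_combination (((Real.sqrt (1 - c)):ℂ)) * hT2c
        | linear_combination (-((Real.sqrt (1 - c)):ℂ)) * hT2c
        | linear_combination (((Real.sqrt (1 - c)):ℂ)*((Real.sqrt (1 - c)):ℂ)) * hT2c + (1/2 : ℂ) * hS2c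
        | linear_combination (-(((Real.sqrt (1 - c)):ℂ)*((Real.sqrt (1 - c)):ℂ))) * hT2c - (1/2 : ℂ) * hS2c
        | linear_combination hA2c + (((Real.sqrt (1 - c)):ℂ)*((Real.sqrt (1 - c)):ℂ)) * hT2c + (1/2 : ℂ) * hS2c
end
end

section
/- Let ρ be a canonical two-qubit state (Bob's marginal maximally mixed) and let c = ‖c⃗‖₂ be the Euclidean norm of Alice's Bloch vector. Then the fully entangled fraction satisfies f(ρ) ≤ (1+√(1−c))²/4. -/
open Matrix Kronecker ComplexOrder

noncomputable section

private lemma key_ineq (p q r c : ℝ) (hp : 0 ≤ p) (hq : 0 ≤ q) (hp2 : p ≤ 1/2)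
    (hqe : q = p - c/2) (hr : r ≤ Real.sqrt (p*q)) :
    (p + q + 2*r)/2 ≤ (1 + Real.sqrt (1-c))^2/4 := by
  have hq2 : q ≤ (1-c)/2 := by rw [hqe]; linarith
  have hc1 : 0 ≤ 1 - c := by linarith
  have h1 : Real.sqrt (p*q) ≤ Real.sqrt ((1-c)/4) := by
    apply Real.sqrt_le_sqrt; nlinarith
  have h2 : Real.sqrt ((1-c)/4) = Real.sqrt (1-c) / 2 := by
    rw [Real.sqrt_div hc1, show Real.sqrt 4 = 2 by
      rw [show (4:ℝ) = 2^2 by norm_num, Real.sqrt_sq (by norm_num)]]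
  have h3 : Real.sqrt (1-c) ^ 2 = 1 - c := Real.sq_sqrt hc1
  nlinarith [Real.sqrt_nonneg (1-c), hr, h1]


lemma cs_psd {n : Type*} [Fintype n] [DecidableEq n] {A : Matrix n n ℂ} (hA : A.PosSemidef)
    (x y : n → ℂ) :
    (star x ⬝ᵥ A.mulVec y).re ^ 2 ≤ (star x ⬝ᵥ A.mulVec x).re * (star y ⬝ᵥ A.mulVec y).re := by
  obtain ⟨B, rfl⟩ : ∃ B : Matrix n n ℂ, A = Bᴴ * B := by
    open MatrixOrder in exact CStarAlgebra.nonneg_iff_eq_star_mul_self.mp hA.nonneg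
  have key : ∀ u v : n → ℂ, star u ⬝ᵥ (Bᴴ * B).mulVec v = star (B.mulVec u) ⬝ᵥ (B.mulVec v) := by
    intro u v
    rw [← Matrix.mulVec_mulVec, Matrix.dotProduct_mulVec, ← Matrix.star_mulVec]
  rw [key x y, key x x, key y y]
  set u : EuclideanSpace ℂ n := (WithLp.equiv 2 _).symm (B.mulVec x)
  set v : EuclideanSpace ℂ n := (WithLp.equiv 2 _).symm (B.mulVec y)
  have hi : ∀ a b : n → ℂ, (inner ℂ ((WithLp.equiv 2 _).symm a : EuclideanSpace ℂ n)
      ((WithLp.equiv 2 _).symm b) : ℂ) = star a ⬝ᵥ b := by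
    intro a b
    simp [PiLp.inner_apply, dotProduct, RCLike.inner_apply, mul_comm]
  rw [← hi (B.mulVec x) (B.mulVec y), ← hi (B.mulVec x) (B.mulVec x), ← hi (B.mulVec y) (B.mulVec y)]
  have h2 : ‖(inner ℂ u v : ℂ)‖ * ‖(inner ℂ v u : ℂ)‖ ≤ (inner ℂ u u : ℂ).re * (inner ℂ v v : ℂ).re :=
    inner_mul_inner_self_le u v
  have h3 : ‖(inner ℂ v u : ℂ)‖ = ‖(inner ℂ u v : ℂ)‖ := by
    rw [← inner_conj_symm u v, RCLike.norm_conj]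
  have h4 : (inner ℂ u v : ℂ).re ^ 2 ≤ ‖(inner ℂ u v : ℂ)‖ ^ 2 := by
    have := Complex.abs_re_le_norm (inner ℂ u v : ℂ)
    have h0 : ‖(inner ℂ u v : ℂ)‖ = ‖(inner ℂ u v : ℂ)‖ := rfl
    rw [h0]
    nlinarith [abs_nonneg ((inner ℂ u v : ℂ).re), sq_abs ((inner ℂ u v : ℂ).re)]
  rw [h3] at h2
  nlinarith


-- entry extraction for PSD quadratic forms
lemma entry_eq {n : Type*} [Fintype n] [DecidableEq n] (A : Matrix n n ℂ) (p q : n) :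
    star (Pi.single p (1:ℂ)) ⬝ᵥ A.mulVec (Pi.single q 1) = A p q := by
  simp [Matrix.mulVec_single, dotProduct, Pi.single_apply,
    Finset.sum_ite_eq', apply_ite]

lemma diag_re_nonneg {n : Type*} [Fintype n] [DecidableEq n] {A : Matrix n n ℂ}
    (hA : A.PosSemidef) (p : n) : 0 ≤ (A p p).re := by
  have h := hA.dotProduct_mulVec_nonneg (Pi.single p 1)
  rw [entry_eq] at h
  exact (Complex.le_def.mp h).1


set_option maxHeartbeats 1000000 in
private lemma traceA_conj (E F : Matrix (Fin 2) (Fin 2) ℂ) (hE : E * Eᴴ = 1)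
    (ρ : Matrix (Fin 2 × Fin 2) (Fin 2 × Fin 2) ℂ) :
    traceA ((E ⊗ₖ F)ᴴ * ρ * (E ⊗ₖ F)) = Fᴴ * traceA ρ * F := by
  have he : ∀ α' α : Fin 2, E α' 0 * star (E α 0) + E α' 1 * star (E α 1)
      = if α' = α then 1 else 0 := by
    intro α' α
    have := congrFun (congrFun hE α') α
    simpa [Matrix.mul_apply, Fin.sum_univ_two, Matrix.conjTranspose_apply,
      Matrix.one_apply] using this
  have h00 := he 0 0; have h01 := he 0 1; have h10 := he 1 0; have h11 := he 1 1
  simp only [show ((0:Fin 2) = 0) = True from by simp, show ((1:Fin 2) = 1) = True from by simp,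
    show ((0:Fin 2) = 1) = False from by simp, show ((1:Fin 2) = 0) = False from by simp,
    if_true, if_false] at h00 h01 h10 h11
  have k00 : traceA ((E ⊗ₖ F)ᴴ * ρ * (E ⊗ₖ F)) 0 0 = (Fᴴ * traceA ρ * F) 0 0 := by
    simp only [traceA, Matrix.of_apply, Matrix.mul_apply, Matrix.conjTranspose_apply,
      Matrix.kroneckerMap_apply, Fintype.sum_prod_type, Fin.sum_univ_two, star_mul']
    linear_combination (star (F 0 0) * F 0 0 * ρ (0,0) (0,0) + star (F 0 0) * F 1 0 * ρ (0,0) (0,1) + star (F 1 0) * F 0 0 * ρ (0,1) (0,0) + star (F 1 0) * F 1 0 * ρ (0,1) (0,1)) * h00 + (star (F 0 0) * F 0 0 * ρ (0,0) (1,0) + star (F 0 0) * F 1 0 * ρ (0,0) (1,1) + star (F 1 0) * F 0 0 * ρ (0,1) (1,0) + star (F 1 0) * F 1 0 * ρ (0,1) (1,1)) * h10 + (star (F 0 0) * F 0 0 * ρ (1,0) (0,0) + star (F 0 0) * F 1 0 * ρ (1,0) (0,1) + star (F 1 0) * F 0 0 * ρ (1,1) (0,0) + star (F 1 0) * F 1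 0 * ρ (1,1) (0,1)) * h01 + (star (F 0 0) * F 0 0 * ρ (1,0) (1,0) + star (F 0 0) * F 1 0 * ρ (1,0) (1,1) + star (F 1 0) * F 0 0 * ρ (1,1) (1,0) + star (F 1 0) * F 1 0 * ρ (1,1) (1,1)) * h11
  have k01 : traceA ((E ⊗ₖ F)ᴴ * ρ * (E ⊗ₖ F)) 0 1 = (Fᴴ * traceA ρ * F) 0 1 := by
    simp only [traceA, Matrix.of_apply, Matrix.mul_apply, Matrix.conjTranspose_apply,
      Matrix.kroneckerMap_apply, Fintype.sum_prod_type, Fin.sum_univ_two, star_mul']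
    linear_combination (star (F 0 0) * F 0 1 * ρ (0,0) (0,0) + star (F 0 0) * F 1 1 * ρ (0,0) (0,1) + star (F 1 0) * F 0 1 * ρ (0,1) (0,0) + star (F 1 0) * F 1 1 * ρ (0,1) (0,1)) * h00 + (star (F 0 0) * F 0 1 * ρ (0,0) (1,0) + star (F 0 0) * F 1 1 * ρ (0,0) (1,1) + star (F 1 0) * F 0 1 * ρ (0,1) (1,0) + star (F 1 0) * F 1 1 * ρ (0,1) (1,1)) * h10 + (star (F 0 0) * F 0 1 * ρ (1,0) (0,0) + star (F 0 0) * F 1 1 * ρ (1,0) (0,1) + star (F 1 0) * F 0 1 * ρ (1,1) (0,0) + star (F 1 0) * F 1 1 * ρ (1,1) (0,1)) * h01 + (star (F 0 0) * F 0 1 * ρ (1,0) (1,0) + star (F 0 0) * F 1 1 * ρ (1,0) (1,1) + star (F 1 0) * F 0 1 * ρ (1,1) (1,0) + star (F 1 0) * F 1 1 * ρ (1,1) (1,1)) * h11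
  have k10 : traceA ((E ⊗ₖ F)ᴴ * ρ * (E ⊗ₖ F)) 1 0 = (Fᴴ * traceA ρ * F) 1 0 := by
    simp only [traceA, Matrix.of_apply, Matrix.mul_apply, Matrix.conjTranspose_apply,
      Matrix.kroneckerMap_apply, Fintype.sum_prod_type, Fin.sum_univ_two, star_mul']
    linear_combination (star (F 0 1) * F 0 0 * ρ (0,0) (0,0) + star (F 0 1) * F 1 0 * ρ (0,0) (0,1) + star (F 1 1) * F 0 0 * ρ (0,1) (0,0) + star (F 1 1) * F 1 0 * ρ (0,1) (0,1)) * h00 + (star (F 0 1) * F 0 0 * ρ (0,0) (1,0) + star (F 0 1) * F 1 0 * ρ (0,0) (1,1) + star (F 1 1) * F 0 0 * ρ (0,1) (1,0) + star (F 1 1) * F 1 0 * ρ (0,1) (1,1)) * h10 + (star (F 0 1) * F 0 0 * ρ (1,0) (0,0) + star (F 0 1) * F 1 0 * ρ (1,0) (0,1) + star (F 1 1) * F 0 0 * ρ (1,1) (0,0) + star (F 1 1) * F 1 0 * ρ (1,1) (0,1)) * h01 + (star (F 0 1) * F 0 0 * ρ (1,0) (1,0) + star (F 0 1) * F 1 0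 * ρ (1,0) (1,1) + star (F 1 1) * F 0 0 * ρ (1,1) (1,0) + star (F 1 1) * F 1 0 * ρ (1,1) (1,1)) * h11
  have k11 : traceA ((E ⊗ₖ F)ᴴ * ρ * (E ⊗ₖ F)) 1 1 = (Fᴴ * traceA ρ * F) 1 1 := by
    simp only [traceA, Matrix.of_apply, Matrix.mul_apply, Matrix.conjTranspose_apply,
      Matrix.kroneckerMap_apply, Fintype.sum_prod_type, Fin.sum_univ_two, star_mul']
    linear_combination (star (F 0 1) * F 0 1 * ρ (0,0) (0,0) + star (F 0 1) * F 1 1 * ρ (0,0) (0,1) + star (F 1 1) * F 0 1 * ρ (0,1) (0,0) + star (F 1 1) * F 1 1 * ρ (0,1) (0,1)) * h00 + (star (F 0 1) * F 0 1 * ρ (0,0) (1,0) + star (F 0 1) * F 1 1 * ρ (0,0) (1,1) + star (F 1 1) * F 0 1 * ρ (0,1) (1,0) + star (F 1 1) * F 1 1 * ρ (0,1) (1,1)) * h10 + (star (F 0 1) * F 0 1 * ρ (1,0) (0,0) + star (F 0 1) * F 1 1 * ρ (1,0) (0,1) + star (F 1 1) * F 0 1 * ρ (1,1) (0,0) + star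 (F 1 1) * F 1 1 * ρ (1,1) (0,1)) * h01 + (star (F 0 1) * F 0 1 * ρ (1,0) (1,0) + star (F 0 1) * F 1 1 * ρ (1,0) (1,1) + star (F 1 1) * F 0 1 * ρ (1,1) (1,0) + star (F 1 1) * F 1 1 * ρ (1,1) (1,1)) * h11
  ext b b'
  fin_cases b <;> fin_cases b' <;> first | exact k00 | exact k01 | exact k10 | exact k11


set_option maxHeartbeats 1000000 in
private lemma traceB_conj (E F : Matrix (Fin 2) (Fin 2) ℂ) (hF : F * Fᴴ = 1)
    (ρ : Matrix (Fin 2 × Fin 2) (Fin 2 × Fin 2) ℂ) :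
    traceB ((E ⊗ₖ F)ᴴ * ρ * (E ⊗ₖ F)) = Eᴴ * traceB ρ * E := by
  have he : ∀ β' β : Fin 2, F β' 0 * star (F β 0) + F β' 1 * star (F β 1)
      = if β' = β then 1 else 0 := by
    intro β' β
    have := congrFun (congrFun hF β') β
    simpa [Matrix.mul_apply, Fin.sum_univ_two, Matrix.conjTranspose_apply,
      Matrix.one_apply] using this
  have h00 := he 0 0; have h01 := he 0 1; have h10 := he 1 0; have h11 := he 1 1
  simp only [show ((0:Fin 2) = 0) = True from by simp, show ((1:Fin 2) = 1) = True from by simp,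
    show ((0:Fin 2) = 1) = False from by simp, show ((1:Fin 2) = 0) = False from by simp,
    if_true, if_false] at h00 h01 h10 h11
  have k00 : traceB ((E ⊗ₖ F)ᴴ * ρ * (E ⊗ₖ F)) 0 0 = (Eᴴ * traceB ρ * E) 0 0 := by
    simp only [traceB, Matrix.of_apply, Matrix.mul_apply, Matrix.conjTranspose_apply,
      Matrix.kroneckerMap_apply, Fintype.sum_prod_type, Fin.sum_univ_two, star_mul']
    linear_combination (star (E 0 0) * E 0 0 * ρ (0,0) (0,0) + star (E 0 0) * E 1 0 * ρ (0,0) (1,0) + star (E 1 0) * E 0 0 * ρ (1,0) (0,0) + star (E 1 0) * E 1 0 * ρ (1,0) (1,0)) * h00 + (star (E 0 0) * E 0 0 * ρ (0,0) (0,1) + star (E 0 0) * E 1 0 * ρ (0,0) (1,1) + star (E 1 0) * E 0 0 * ρ (1,0) (0,1) + star (E 1 0) * E 1 0 * ρ (1,0) (1,1)) * h10 + (star (E 0 0) * E 0 0 * ρ (0,1) (0,0) + star (E 0 0) * E 1 0 * ρ (0,1) (1,0) + star (E 1 0) * E 0 0 * ρ (1,1) (0,0) + star (E 1 0) * E 1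 0 * ρ (1,1) (1,0)) * h01 + (star (E 0 0) * E 0 0 * ρ (0,1) (0,1) + star (E 0 0) * E 1 0 * ρ (0,1) (1,1) + star (E 1 0) * E 0 0 * ρ (1,1) (0,1) + star (E 1 0) * E 1 0 * ρ (1,1) (1,1)) * h11
  have k01 : traceB ((E ⊗ₖ F)ᴴ * ρ * (E ⊗ₖ F)) 0 1 = (Eᴴ * traceB ρ * E) 0 1 := by
    simp only [traceB, Matrix.of_apply, Matrix.mul_apply, Matrix.conjTranspose_apply,
      Matrix.kroneckerMap_apply, Fintype.sum_prod_type, Fin.sum_univ_two, star_mul']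
    linear_combination (star (E 0 0) * E 0 1 * ρ (0,0) (0,0) + star (E 0 0) * E 1 1 * ρ (0,0) (1,0) + star (E 1 0) * E 0 1 * ρ (1,0) (0,0) + star (E 1 0) * E 1 1 * ρ (1,0) (1,0)) * h00 + (star (E 0 0) * E 0 1 * ρ (0,0) (0,1) + star (E 0 0) * E 1 1 * ρ (0,0) (1,1) + star (E 1 0) * E 0 1 * ρ (1,0) (0,1) + star (E 1 0) * E 1 1 * ρ (1,0) (1,1)) * h10 + (star (E 0 0) * E 0 1 * ρ (0,1) (0,0) + star (E 0 0) * E 1 1 * ρ (0,1) (1,0) + star (E 1 0) * E 0 1 * ρ (1,1) (0,0) + star (E 1 0) * E 1 1 * ρ (1,1) (1,0)) * h01 + (star (E 0 0) * E 0 1 * ρ (0,1) (0,1) + star (E 0 0) * E 1 1 * ρ (0,1) (1,1) + star (E 1 0) * E 0 1 * ρ (1,1) (0,1) + star (E 1 0) * E 1 1 * ρ (1,1) (1,1)) * h11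
  have k10 : traceB ((E ⊗ₖ F)ᴴ * ρ * (E ⊗ₖ F)) 1 0 = (Eᴴ * traceB ρ * E) 1 0 := by
    simp only [traceB, Matrix.of_apply, Matrix.mul_apply, Matrix.conjTranspose_apply,
      Matrix.kroneckerMap_apply, Fintype.sum_prod_type, Fin.sum_univ_two, star_mul']
    linear_combination (star (E 0 1) * E 0 0 * ρ (0,0) (0,0) + star (E 0 1) * E 1 0 * ρ (0,0) (1,0) + star (E 1 1) * E 0 0 * ρ (1,0) (0,0) + star (E 1 1) * E 1 0 * ρ (1,0) (1,0)) * h00 + (star (E 0 1) * E 0 0 * ρ (0,0) (0,1) + star (E 0 1) * E 1 0 * ρ (0,0) (1,1) + star (E 1 1) * E 0 0 * ρ (1,0) (0,1) + star (E 1 1) * E 1 0 * ρ (1,0) (1,1)) * h10 + (star (E 0 1) * E 0 0 * ρ (0,1) (0,0) + star (E 0 1) * E 1 0 * ρ (0,1) (1,0) + star (E 1 1) * E 0 0 * ρ (1,1) (0,0) + star (E 1 1) * E 1 0 * ρ (1,1) (1,0)) * h01 + (star (E 0 1) * E 0 0 * ρ (0,1) (0,1) + star (E 0 1) * E 1 0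 * ρ (0,1) (1,1) + star (E 1 1) * E 0 0 * ρ (1,1) (0,1) + star (E 1 1) * E 1 0 * ρ (1,1) (1,1)) * h11
  have k11 : traceB ((E ⊗ₖ F)ᴴ * ρ * (E ⊗ₖ F)) 1 1 = (Eᴴ * traceB ρ * E) 1 1 := by
    simp only [traceB, Matrix.of_apply, Matrix.mul_apply, Matrix.conjTranspose_apply,
      Matrix.kroneckerMap_apply, Fintype.sum_prod_type, Fin.sum_univ_two, star_mul']
    linear_combination (star (E 0 1) * E 0 1 * ρ (0,0) (0,0) + star (E 0 1) * E 1 1 * ρ (0,0) (1,0) + star (E 1 1) * E 0 1 * ρ (1,0) (0,0) + star (E 1 1) * E 1 1 * ρ (1,0) (1,0)) * h00 + (star (E 0 1) * E 0 1 * ρ (0,0) (0,1) + star (E 0 1) * E 1 1 * ρ (0,0) (1,1) + star (E 1 1) * E 0 1 * ρ (1,0) (0,1) + star (E 1 1) * E 1 1 * ρ (1,0) (1,1)) * h10 + (star (E 0 1) * E 0 1 * ρ (0,1) (0,0) + star (E 0 1) * E 1 1 * ρ (0,1) (1,0) + star (E 1 1) * E 0 1 * ρ (1,1) (0,0) + star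 (E 1 1) * E 1 1 * ρ (1,1) (1,0)) * h01 + (star (E 0 1) * E 0 1 * ρ (0,1) (0,1) + star (E 0 1) * E 1 1 * ρ (0,1) (1,1) + star (E 1 1) * E 0 1 * ρ (1,1) (0,1) + star (E 1 1) * E 1 1 * ρ (1,1) (1,1)) * h11
  ext a a'
  fin_cases a <;> fin_cases a' <;> first | exact k00 | exact k01 | exact k10 | exact k11


-- helper transpose/map facts
lemma conjT_map_star (A : Matrix (Fin 2) (Fin 2) ℂ) : (Aᴴ).map (starRingEnd ℂ) = Aᵀ := by
  ext i j; simp [Matrix.conjTranspose_apply]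
lemma map_star_conjT (A : Matrix (Fin 2) (Fin 2) ℂ) : (A.map (starRingEnd ℂ))ᴴ = Aᵀ := by
  ext i j; simp [Matrix.conjTranspose_apply]
lemma transpose_map_star (A : Matrix (Fin 2) (Fin 2) ℂ) : (A.map (starRingEnd ℂ))ᵀ = Aᴴ := by
  ext i j; simp [Matrix.conjTranspose_apply]
lemma tct (A : Matrix (Fin 2) (Fin 2) ℂ) : Aᵀᴴ = A.map (starRingEnd ℂ) := by
  ext i j; simp [Matrix.conjTranspose_apply]
lemma smul_one_map_star : (((2:ℂ)⁻¹ • 1 : Matrix (Fin 2) (Fin 2) ℂ)).map (starRingEnd ℂ)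
    = (2:ℂ)⁻¹ • 1 := by
  ext i j
  by_cases h : i = j <;> simp [Matrix.one_apply, h, Complex.conj_ofNat]

def Φp : Fin 2 × Fin 2 → ℂ := fun p => if p.1 = p.2 then ((Real.sqrt 2 : ℝ):ℂ)⁻¹ else 0

-- F construction
lemma buildF (M E : Matrix (Fin 2) (Fin 2) ℂ)
    (hM : M * Mᴴ = (2:ℂ)⁻¹ • 1) (hE : Eᴴ * E = 1) :
    ∃ F : Matrix (Fin 2) (Fin 2) ℂ, Fᴴ * F = 1 ∧
      (E ⊗ₖ F).mulVec Φp = fun p => M p.1 p.2 := by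
  have hEE : E * Eᴴ = 1 := mul_eq_one_comm.mp hE
  set s : ℂ := ((Real.sqrt 2 : ℝ) : ℂ) with hs
  have hs2 : s * s = 2 := by
    rw [hs]; norm_cast; rw [Real.mul_self_sqrt] <;> norm_num
  have hsne : s ≠ 0 := by
    rw [hs]; norm_cast
    simp [Real.sqrt_eq_zero']
  refine ⟨s • (Mᵀ * E.map (starRingEnd ℂ)), ?_, ?_⟩
  · have hMbar : M.map (starRingEnd ℂ) * Mᵀ = (2:ℂ)⁻¹ • 1 := by
      have h1 : M.map (starRingEnd ℂ) * Mᵀ = (M * Mᴴ).map (starRingEnd ℂ) := by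
        rw [Matrix.map_mul, conjT_map_star]
      rw [h1, hM, smul_one_map_star]
    have hstar_s : star s = s := by rw [hs]; exact Complex.conj_ofReal _
    rw [Matrix.conjTranspose_smul, Matrix.conjTranspose_mul, map_star_conjT, tct]
    rw [hstar_s, Matrix.smul_mul, Matrix.mul_smul, smul_smul, hs2]
    calc (2:ℂ) • (Eᵀ * (M.map (starRingEnd ℂ)) * (Mᵀ * E.map (starRingEnd ℂ)))
        = (2:ℂ) • (Eᵀ * (M.map (starRingEnd ℂ) * Mᵀ) * E.map (starRingEnd ℂ)) := by
          rw [Matrix.mul_assoc (Eᵀ), ← Matrix.mul_assoc (M.map (starRingEnd ℂ)),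
            ← Matrix.mul_assoc, ← Matrix.mul_assoc]
      _ = Eᵀ * E.map (starRingEnd ℂ) := by
          rw [hMbar]
          rw [Matrix.mul_smul, Matrix.smul_mul, smul_smul]
          norm_num
          try rw [Matrix.mul_one]
      _ = 1 := by
          have : Eᵀ * E.map (starRingEnd ℂ) = (Eᴴ * E).map (starRingEnd ℂ) := by
            rw [Matrix.map_mul, conjT_map_star]
          rw [this, hE]
          ext i j
          by_cases h : i = j <;> simp [Matrix.one_apply, h]
  · have hEFT : E * (s • (Mᵀ * E.map (starRingEnd ℂ)))ᵀ = s • M := by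
      rw [Matrix.transpose_smul, Matrix.transpose_mul, transpose_map_star, Matrix.mul_smul,
        ← Matrix.mul_assoc, hEE, Matrix.one_mul, Matrix.transpose_transpose]
    funext p
    obtain ⟨α, β⟩ := p
    have := congrFun (congrFun hEFT α) β
    simp only [Matrix.mul_apply, Fin.sum_univ_two, Matrix.smul_apply, smul_eq_mul,
      Matrix.transpose_apply] at this
    simp only [Matrix.mulVec, dotProduct, Fintype.sum_prod_type, Fin.sum_univ_two,
      Matrix.kroneckerMap_apply, Φp, Matrix.smul_apply, Matrix.mul_apply,
      Matrix.transpose_apply, Matrix.map_apply, smul_eq_mul]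
    norm_num
    have h2 := congrArg (fun z => s⁻¹ * z) this
    beta_reduce at h2
    field_simp at h2 ⊢
    simp only [Matrix.map_apply] at h2
    linear_combination s * h2


lemma buildE (τ00 τ11 w : ℂ) (c n2 : ℝ) (v0 v1 : ℂ) (hn2 : 0 < n2)
    (hnorm : v0 * star v0 + v1 * star v1 = (n2 : ℂ))
    (heig0 : τ00 * v0 + w * v1 = (((1+c)/2 : ℝ) : ℂ) * v0)
    (heig1 : star w * v0 + τ11 * v1 = (((1+c)/2 : ℝ) : ℂ) * v1) :
    ∃ E : Matrix (Fin 2) (Fin 2) ℂ, Eᴴ * E = 1 ∧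
      (Eᴴ * !![τ00, w; star w, τ11] * E) 0 0 = (((1+c)/2 : ℝ) : ℂ) := by
  set t : ℝ := (Real.sqrt n2)⁻¹ with htdef
  have ht : (t : ℂ) * t * n2 = 1 := by
    have h0 : Real.sqrt n2 ≠ 0 := ne_of_gt (Real.sqrt_pos.mpr hn2)
    have : t * t * n2 = 1 := by
      rw [htdef, ← mul_inv, Real.mul_self_sqrt hn2.le]
      field_simp
    norm_cast
  simp only [RCLike.star_def] at hnorm heig0 heig1
  refine ⟨!![(t:ℂ)*v0, -((t:ℂ)*star v1); (t:ℂ)*v1, (t:ℂ)*star v0], ?_, ?_⟩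
  · ext i j
    fin_cases i <;> fin_cases j <;>
      simp only [Matrix.mul_apply, Fin.sum_univ_two, Matrix.conjTranspose_apply,
        Matrix.cons_val', Matrix.cons_val_zero, Matrix.cons_val_one, Matrix.head_cons,
        Matrix.head_fin_const, Matrix.empty_val', Matrix.cons_val_fin_one, Matrix.one_apply,
        star_mul', star_star, star_neg, Fin.zero_eta, Fin.mk_one, RCLike.star_def] <;>
      norm_num
    · linear_combination (t:ℂ)*(t:ℂ)*hnorm + ht
    · ring
    · ring
    · linear_combination (t:ℂ)*(t:ℂ)*hnorm + ht
  · simp [Matrix.mul_apply, Fin.sum_univ_two, Matrix.conjTranspose_apply, star_mul',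
      RCLike.star_def]
    push_cast at hnorm heig0 heig1 ht ⊢
    linear_combination (t:ℂ)*(t:ℂ)*((starRingEnd ℂ) v0)*heig0 + (t:ℂ)*(t:ℂ)*((starRingEnd ℂ) v1)*heig1 +
      ((1+(c:ℂ))/2)*(t:ℂ)*(t:ℂ)*hnorm + ((1+(c:ℂ))/2)*ht


private lemma bloch_sq (ρ : Matrix (Fin 2 × Fin 2) (Fin 2 × Fin 2) ℂ) (hH : ρ.IsHermitian) :
    blochNormA ρ ^ 2 = ((traceB ρ 0 0).re - (traceB ρ 1 1).re)^2
      + 4 * Complex.normSq (traceB ρ 0 1) := by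
  have hherm : ∀ p q, ρ q p = star (ρ p q) := fun p q => by
    conv_lhs => rw [← hH]
    simp [Matrix.conjTranspose_apply]
  have hsq : blochNormA ρ ^ 2 = ∑ i, blochA ρ i ^ 2 := by
    rw [blochNormA, Real.sq_sqrt]
    positivity
  rw [hsq, Fin.sum_univ_three]
  have h1 : blochA ρ 0 = 2 * (traceB ρ 0 1).re := by
    simp only [blochA, Matrix.trace, Matrix.diag_apply, Matrix.mul_apply, pauli, σ1,
      Matrix.kroneckerMap_apply, Fintype.sum_prod_type, Fin.sum_univ_two, Matrix.one_apply,
      traceB, Matrix.of_apply]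
    rw [hherm (0,0) (1,0), hherm (0,1) (1,1)]
    simp [Complex.add_re]
    ring
  have h2 : blochA ρ 1 = -2 * (traceB ρ 0 1).im := by
    simp only [blochA, Matrix.trace, Matrix.diag_apply, Matrix.mul_apply, pauli, σ2,
      Matrix.kroneckerMap_apply, Fintype.sum_prod_type, Fin.sum_univ_two, Matrix.one_apply,
      traceB, Matrix.of_apply]
    rw [hherm (0,0) (1,0), hherm (0,1) (1,1)]
    simp [Complex.add_re, Complex.add_im]
    ring
  have h3 : blochA ρ 2 = (traceB ρ 0 0).re - (traceB ρ 1 1).re := by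
    simp only [blochA, Matrix.trace, Matrix.diag_apply, Matrix.mul_apply, pauli, σ3,
      Matrix.kroneckerMap_apply, Fintype.sum_prod_type, Fin.sum_univ_two, Matrix.one_apply,
      traceB, Matrix.of_apply]
    simp [Complex.add_re]
    ring
  rw [h1, h2, h3, Complex.normSq_apply]
  ring


lemma core (ρ : Matrix (Fin 2 × Fin 2) (Fin 2 × Fin 2) ℂ) (hPSD : ρ.PosSemidef)
    (hBob : traceA ρ = (1/2 : ℂ) • 1) (E F : Matrix (Fin 2) (Fin 2) ℂ)
    (hEE : E * Eᴴ = 1) (hFF : Fᴴ * F = 1) (c : ℝ)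
    (hAlice : (Eᴴ * traceB ρ * E) 0 0 = (((1+c)/2 : ℝ) : ℂ))
    (φ : Fin 2 × Fin 2 → ℂ) (hφE : φ = (E ⊗ₖ F).mulVec Φp) :
    (star φ ⬝ᵥ ρ.mulVec φ).re ≤ (1 + Real.sqrt (1-c))^2/4 := by
  set W := E ⊗ₖ F with hW
  set ρ' := Wᴴ * ρ * W with hρ'
  have hPSD' : ρ'.PosSemidef := hPSD.conjTranspose_mul_mul_same W
  have hquad : star φ ⬝ᵥ ρ.mulVec φ = star Φp ⬝ᵥ ρ'.mulVec Φp := by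
    rw [hφE, hρ', Matrix.star_mulVec, Matrix.mulVec_mulVec, Matrix.dotProduct_mulVec,
      Matrix.vecMul_vecMul, Matrix.dotProduct_mulVec (star Φp), Matrix.mul_assoc]
  -- the five real quantities
  set p := (ρ' (0,0) (0,0)).re
  set q := (ρ' (1,1) (1,1)).re
  set r := (ρ' (0,0) (1,1)).re
  set s01 := (ρ' (0,1) (0,1)).re
  set s10 := (ρ' (1,0) (1,0)).re
  have hp : 0 ≤ p := diag_re_nonneg hPSD' _
  have hq : 0 ≤ q := diag_re_nonneg hPSD' _
  have hs01 : 0 ≤ s01 := diag_re_nonneg hPSD' _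
  have hs10 : 0 ≤ s10 := diag_re_nonneg hPSD' _
  -- Bob marginal of ρ'
  have hB' : traceA ρ' = (1/2 : ℂ) • 1 := by
    rw [hρ', hW, traceA_conj E F hEE, hBob]
    rw [Matrix.mul_smul, Matrix.smul_mul, Matrix.mul_one, hFF]
  have hBob0 : p + s10 = 1/2 := by
    have := congrFun (congrFun hB' 0) 0
    simp only [traceA, Matrix.of_apply, Fin.sum_univ_two, Matrix.smul_apply,
      Matrix.one_apply_eq, smul_eq_mul, mul_one] at this
    have := congrArg Complex.re this
    simpa [Complex.add_re] using this
  have hBob1 : s01 + q = 1/2 := by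
    have := congrFun (congrFun hB' 1) 1
    simp only [traceA, Matrix.of_apply, Fin.sum_univ_two, Matrix.smul_apply,
      Matrix.one_apply_eq, smul_eq_mul, mul_one] at this
    have := congrArg Complex.re this
    simpa [Complex.add_re] using this
  -- Alice marginal of ρ'
  have hA' : traceB ρ' = Eᴴ * traceB ρ * E := traceB_conj E F (mul_eq_one_comm.mp hFF) ρ
  have hAl0 : p + s01 = (1+c)/2 := by
    have h1 := congrFun (congrFun hA' 0) 0
    rw [hAlice] at h1
    simp only [traceB, Matrix.of_apply, Fin.sum_univ_two] at h1
    have := congrArg Complex.re h1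
    simpa [Complex.add_re, Complex.ofReal_re] using this
  -- Cauchy-Schwarz
  have hcs : r ^ 2 ≤ p * q := by
    have h := cs_psd hPSD' (Pi.single ((0:Fin 2),(0:Fin 2)) 1) (Pi.single ((1:Fin 2),(1:Fin 2)) 1)
    rwa [entry_eq, entry_eq, entry_eq] at h
  have hr : r ≤ Real.sqrt (p * q) := by
    have h1 : r ≤ |r| := le_abs_self r
    have h2 : |r| = Real.sqrt (r^2) := (Real.sqrt_sq_eq_abs r).symm
    calc r ≤ |r| := h1
    _ = Real.sqrt (r^2) := h2
    _ ≤ Real.sqrt (p*q) := Real.sqrt_le_sqrt hcs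
  -- value of the quadratic form
  have hval : (star Φp ⬝ᵥ ρ'.mulVec Φp).re = (p + q + 2*r)/2 := by
    have h2 : ((Real.sqrt 2 : ℝ):ℂ)⁻¹ * ((Real.sqrt 2 : ℝ):ℂ)⁻¹ = 1/2 := by
      rw [← mul_inv]
      norm_cast
      rw [Real.mul_self_sqrt (by norm_num)]
      norm_num
    have hherm : ρ' (1,1) (0,0) = star (ρ' (0,0) (1,1)) := by
      conv_lhs => rw [← hPSD'.1]
      simp [Matrix.conjTranspose_apply]
    have hC : star Φp ⬝ᵥ ρ'.mulVec Φp
        = (2:ℂ)⁻¹ * (ρ' (0,0) (0,0) + ρ' (0,0) (1,1) + ρ' (1,1) (0,0) + ρ' (1,1) (1,1)) := by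
      simp only [dotProduct, Matrix.mulVec, dotProduct, Φp, Pi.star_apply,
        Fintype.sum_prod_type, Fin.sum_univ_two]
      norm_num
      linear_combination (ρ' (0,0) (0,0) + ρ' (0,0) (1,1) + ρ' (1,1) (0,0) + ρ' (1,1) (1,1)) * h2
    rw [hC, hherm]
    have : ∀ z : ℂ, ((2:ℂ)⁻¹ * z).re = z.re / 2 := by
      intro z
      rw [show ((2:ℂ)⁻¹) = (((2:ℝ)⁻¹ : ℝ) : ℂ) by norm_num, Complex.re_ofReal_mul]
      ring
    rw [this]
    simp only [Complex.add_re, RCLike.star_def, Complex.conj_re]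
    ring
  rw [hquad, hval]
  exact key_ineq p q r c hp hq (by linarith) (by linarith) hr


lemma pointwise (ρ : Matrix (Fin 2 × Fin 2) (Fin 2 × Fin 2) ℂ) (hPSD : ρ.PosSemidef)
    (htr : ρ.trace = 1) (hBob : traceA ρ = (1/2:ℂ) • 1)
    (φ : Fin 2 × Fin 2 → ℂ) (hφ : IsMaxEntangled φ) :
    (star φ ⬝ᵥ ρ.mulVec φ).re ≤ (1 + Real.sqrt (1 - blochNormA ρ))^2/4 := by
  obtain ⟨hn, hm⟩ := hφ
  set c := blochNormA ρ with hcdef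
  have hc0 : 0 ≤ c := Real.sqrt_nonneg _
  set τ := traceB ρ with hτdef
  set x : ℝ := (τ 0 0).re - (τ 1 1).re with hxdef
  set w : ℂ := τ 0 1 with hwdef
  have hherm : ∀ p q, ρ q p = star (ρ p q) := fun p q => by
    conv_lhs => rw [← hPSD.1]
    simp [Matrix.conjTranspose_apply]
  have hdiag : ∀ p, (ρ p p).im = 0 := fun p => by
    have := congrArg Complex.im (hherm p p)
    simp only [Complex.star_def, Complex.conj_im] at this
    linarith
  have hcsq : c^2 = x^2 + 4*Complex.normSq w := bloch_sq ρ hPSD.1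
  -- entries of τ
  have hτ00e : τ 0 0 = ρ (0,0) (0,0) + ρ (0,1) (0,1) := by
    simp [hτdef, traceB, Fin.sum_univ_two]
  have hτ11e : τ 1 1 = ρ (1,0) (1,0) + ρ (1,1) (1,1) := by
    simp [hτdef, traceB, Fin.sum_univ_two]
  have hwe : w = ρ (0,0) (1,0) + ρ (0,1) (1,1) := by
    simp [hwdef, hτdef, traceB, Fin.sum_univ_two]
  have hτ10 : τ 1 0 = star w := by
    simp only [hwe, hτdef, traceB, Matrix.of_apply, Fin.sum_univ_two, star_add]
    rw [hherm (0,0) (1,0), hherm (0,1) (1,1)]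
  have htrre : (τ 0 0).re + (τ 1 1).re = 1 := by
    have h1 := congrArg Complex.re htr
    simp only [Matrix.trace, Matrix.diag_apply, Fintype.sum_prod_type, Fin.sum_univ_two,
      Complex.add_re, Complex.one_re] at h1
    simp only [hτ00e, hτ11e, Complex.add_re]
    linarith
  have hτ00 : τ 0 0 = (((1+x)/2 : ℝ) : ℂ) := by
    apply Complex.ext
    · simp only [Complex.ofReal_re]; rw [hxdef]; linarith
    · simp only [Complex.ofReal_im, hτ00e, Complex.add_im, hdiag]; ring
  have hτ11 : τ 1 1 = (((1-x)/2 : ℝ) : ℂ) := by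
    apply Complex.ext
    · simp only [Complex.ofReal_re]; rw [hxdef]; linarith
    · simp only [Complex.ofReal_im, hτ11e, Complex.add_im, hdiag]; ring
  have hτmat : τ = !![(((1+x)/2:ℝ):ℂ), w; star w, (((1-x)/2:ℝ):ℂ)] := by
    ext i j
    fin_cases i <;> fin_cases j <;>
      simp only [Matrix.cons_val', Matrix.cons_val_zero, Matrix.cons_val_one, Matrix.head_cons,
        Matrix.empty_val', Matrix.cons_val_fin_one, Matrix.head_fin_const, Fin.zero_eta,
        Fin.mk_one]
    · exact hτ00
    · rfl
    · exact hτ10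
    · exact hτ11
  have hcsqC : ((c:ℝ):ℂ)^2 = ((x:ℝ):ℂ)^2 + 4*(w * (starRingEnd ℂ) w) := by
    rw [Complex.mul_conj]
    exact_mod_cast congrArg (fun t : ℝ => (t : ℂ)) hcsq
  -- build E
  obtain ⟨E, hE, hAliceE⟩ : ∃ E : Matrix (Fin 2) (Fin 2) ℂ, Eᴴ*E = 1 ∧
      (Eᴴ * τ * E) 0 0 = (((1+c)/2:ℝ):ℂ) := by
    rcases eq_or_lt_of_le hc0 with hc | hc
    · refine ⟨1, by simp, ?_⟩
      have hx0 : x = 0 := by nlinarith [Complex.normSq_nonneg w]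
      rw [Matrix.conjTranspose_one, Matrix.one_mul, Matrix.mul_one, hτ00, hx0, ← hc]
    · have hsr : star (((1+c)/2 : ℝ) : ℂ) = (((1+c)/2 : ℝ) : ℂ) := by
        rw [RCLike.star_def, Complex.conj_ofReal]
      rcases le_or_gt 0 x with hx | hx
      · have hn2 : 0 < c*(c+x)/2 := by nlinarith
        obtain ⟨E, h1, h2⟩ := buildE (((1+x)/2:ℝ):ℂ) (((1-x)/2:ℝ):ℂ) w c (c*(c+x)/2)
          (((c+x)/2:ℝ):ℂ) (star w) hn2
          (by simp only [RCLike.star_def, Complex.conj_ofReal, Complex.conj_conj]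
              push_cast
              linear_combination (-1/4 : ℂ) * hcsqC)
          (by simp only [RCLike.star_def, Complex.conj_ofReal, Complex.conj_conj]
              push_cast
              linear_combination (-1/4 : ℂ) * hcsqC)
          (by simp only [RCLike.star_def, Complex.conj_ofReal, Complex.conj_conj]
              push_cast; ring)
        exact ⟨E, h1, by rw [hτmat]; exact h2⟩
      · have hn2 : 0 < c*(c-x)/2 := by nlinarith
        obtain ⟨E, h1, h2⟩ := buildE (((1+x)/2:ℝ):ℂ) (((1-x)/2:ℝ):ℂ) w c (c*(c-x)/2)
          w (((c-x)/2:ℝ):ℂ) hn2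
          (by simp only [RCLike.star_def, Complex.conj_ofReal, Complex.conj_conj]
              push_cast
              linear_combination (-1/4 : ℂ) * hcsqC)
          (by push_cast; ring)
          (by simp only [RCLike.star_def, Complex.conj_ofReal, Complex.conj_conj]
              push_cast
              linear_combination (-1/4 : ℂ) * hcsqC)
        exact ⟨E, h1, by rw [hτmat]; exact h2⟩
  -- build F
  set M : Matrix (Fin 2) (Fin 2) ℂ := Matrix.of (fun a b => φ (a,b)) with hMdef
  have hMM : M * Mᴴ = (2:ℂ)⁻¹ • 1 := by
    ext a a'
    have := hm a a'
    simp only [Matrix.mul_apply, Matrix.conjTranspose_apply, Fin.sum_univ_two, hMdef,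
      Matrix.of_apply, Matrix.smul_apply, Matrix.one_apply, smul_eq_mul]
    rw [Fin.sum_univ_two] at this
    rw [this]
    by_cases h : a = a' <;> simp [h] <;> norm_num
  obtain ⟨F, hFF, hmv⟩ := buildF M E hMM hE
  have hφE : φ = (E ⊗ₖ F).mulVec Φp := by
    rw [hmv]; funext p; rfl
  exact core ρ hPSD hBob E F (mul_eq_one_comm.mp hE) hFF c hAliceE φ hφE

/-- For a canonical two-qubit state `ρ` with Bloch-vector norm `c`,
the fully entangled fraction satisfies `f(ρ) ≤ (1+√(1−c))²/4`. -/
theorem fef_le_of_canonical (ρ : Matrix (Fin 2 × Fin 2) (Fin 2 × Fin 2) ℂ)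
    (hρ : IsCanonical ρ) :
    fef ρ ≤ (1 + Real.sqrt (1 - blochNormA ρ)) ^ 2 / 4 := by
  obtain ⟨⟨hPSD, htr⟩, hBob⟩ := hρ
  apply Real.sSup_le
  · rintro t ⟨φ, hφ, rfl⟩
    exact pointwise ρ hPSD htr hBob φ hφ
  · positivity
end
end

section
/- For every c ∈ [0,1], the maximally obese state ρ_c has fully entangled fraction f(ρ_c) = (1+√(1−c))²/4. -/
open Matrix Kronecker ComplexOrder

noncomputable section

lemma quad (c : ℝ) (φ : Fin 2 × Fin 2 → ℂ) :
    star φ ⬝ᵥ (rhoMax c).mulVec φ =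
      ((c:ℂ)/2) * (star (φ (0,0)) * φ (0,0)) + (1/2) * (star (φ (0,1)) * φ (0,1))
      + ((1 - (c:ℂ))/2) * (star (φ (1,0)) * φ (1,0))
      + ((Real.sqrt (1-c) : ℂ)/2) * (star (φ (0,1)) * φ (1,0) + star (φ (1,0)) * φ (0,1)) := by
  simp [dotProduct, mulVec, rhoMax, Fintype.sum_prod_type, Fin.sum_univ_two, Prod.ext_iff]
  ring


/-- The maximally obese state has fully entangled fraction
`f(ρ_c) = (1+√(1−c))²/4`. -/
theorem fef_rhoMax (c : ℝ) (hc : c ∈ Set.Icc (0 : ℝ) 1) :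
    fef (rhoMax c) = (1 + Real.sqrt (1 - c)) ^ 2 / 4 := by
  obtain ⟨hc0, hc1⟩ := hc
  have h1c : (0:ℝ) ≤ 1 - c := by linarith
  set s := Real.sqrt (1 - c) with hs
  have hs0 : 0 ≤ s := Real.sqrt_nonneg _
  have hs2 : s ^ 2 = 1 - c := Real.sq_sqrt h1c
  have htarget : (1 + s) ^ 2 / 4 = 1/4 + (1 - c)/4 + s/2 := by nlinarith
  set S := { x : ℝ | ∃ φ : Fin 2 × Fin 2 → ℂ, IsMaxEntangled φ ∧
      x = (star φ ⬝ᵥ (rhoMax c).mulVec φ).re } with hS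
  -- the witness vector (|01⟩+|10⟩)/√2
  set k : ℂ := Complex.ofReal (Real.sqrt 2)⁻¹ with hk
  have hconj : (starRingEnd ℂ) k = k := by rw [hk]; exact Complex.conj_ofReal _
  have hkk : k * k = 1/2 := by
    rw [hk, ← Complex.ofReal_mul, ← mul_inv, Real.mul_self_sqrt (by norm_num)]
    norm_num
  have hksq : Complex.normSq k = 1/2 := by
    rw [hk, Complex.normSq_ofReal, ← mul_inv, Real.mul_self_sqrt (by norm_num)]
    norm_num
  set φ0 : Fin 2 × Fin 2 → ℂ := fun p => if p.1 = p.2 then 0 else k with hφ0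
  have hme : IsMaxEntangled φ0 := by
    constructor
    · simp [hφ0, Fintype.sum_prod_type, Fin.sum_univ_two, hksq]
      norm_num
    · intro a a'
      fin_cases a <;> fin_cases a' <;>
        simp [hφ0, Fin.sum_univ_two, Complex.star_def, hconj, hkk]
  have hval : star φ0 ⬝ᵥ (rhoMax c).mulVec φ0 = ((1/4 + (1-c)/4 + s/2 : ℝ) : ℂ) := by
    rw [quad]
    simp only [hφ0]
    norm_num [Complex.star_def, hconj, hkk]
    ring
  have hwit : (1 + s) ^ 2 / 4 ∈ S := by
    refine ⟨φ0, hme, ?_⟩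
    rw [hval, Complex.ofReal_re, htarget]
  have hbdd : ∀ x ∈ S, x ≤ (1 + s) ^ 2 / 4 := by
    rintro x ⟨φ, ⟨hn, hmarg⟩, rfl⟩
    have h0 := hmarg 0 0
    have h1 := hmarg 1 1
    simp [Fin.sum_univ_two] at h0 h1
    have h0' : Complex.normSq (φ (0,0)) + Complex.normSq (φ (0,1)) = 1/2 := by
      have := congrArg Complex.re h0
      simpa [Complex.mul_conj, Complex.add_re] using this
    have h1' : Complex.normSq (φ (1,0)) + Complex.normSq (φ (1,1)) = 1/2 := by
      have := congrArg Complex.re h1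
      simpa [Complex.mul_conj, Complex.add_re] using this
    have hb := Complex.normSq_nonneg (φ (0,1))
    have hd := Complex.normSq_nonneg (φ (1,0))
    have ha := Complex.normSq_nonneg (φ (0,0))
    have he := Complex.normSq_nonneg (φ (1,1))
    set w : ℂ := star (φ (0,1)) * φ (1,0) + star (φ (1,0)) * φ (0,1) with hw
    have hcross : w.re ≤ 1 := by
      have e0 : star (φ (1,0)) * φ (0,1) = star (star (φ (0,1)) * φ (1,0)) := by
        simp [mul_comm]
      have e2 : (star (star (φ (0,1)) * φ (1,0))).re = (star (φ (0,1)) * φ (1,0)).re := by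
        simp [Complex.star_def]
      have e1 : w.re = 2 * (star (φ (0,1)) * φ (1,0)).re := by
        rw [hw, e0, Complex.add_re, e2]; ring
      rw [e1]
      have h2 : (star (φ (0,1)) * φ (1,0)).re ≤ ‖star (φ (0,1)) * φ (1,0)‖ :=
        Complex.re_le_norm _
      have h3 : ‖star (φ (0,1)) * φ (1,0)‖
          = Real.sqrt (Complex.normSq (φ (0,1))) * Real.sqrt (Complex.normSq (φ (1,0))) := by
        rw [norm_mul]
        simp [Complex.norm_def, Complex.star_def, Complex.normSq_conj]
      have h4 : Real.sqrt (Complex.normSq (φ (0,1))) ≤ Real.sqrt (1/2) :=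
        Real.sqrt_le_sqrt (by linarith)
      have h5 : Real.sqrt (Complex.normSq (φ (1,0))) ≤ Real.sqrt (1/2) :=
        Real.sqrt_le_sqrt (by linarith)
      have h6 : Real.sqrt (1/2) * Real.sqrt (1/2) = 1/2 := Real.mul_self_sqrt (by norm_num)
      nlinarith [Real.sqrt_nonneg (Complex.normSq (φ (0,1))),
        Real.sqrt_nonneg (Complex.normSq (φ (1,0))), Real.sqrt_nonneg (1/2:ℝ)]
    have hmc : ∀ z : ℂ, star z * z = (Complex.normSq z : ℂ) := fun z => by
      simp [Complex.star_def, ← Complex.normSq_eq_conj_mul_self]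
    have hsplit : star φ ⬝ᵥ (rhoMax c).mulVec φ
        = ((c/2 * Complex.normSq (φ (0,0)) + 1/2 * Complex.normSq (φ (0,1))
            + (1-c)/2 * Complex.normSq (φ (1,0)) : ℝ) : ℂ) + ((s/2 : ℝ) : ℂ) * w := by
      rw [quad, hmc, hmc, hmc, hw]
      push_cast
      ring
    rw [hsplit, Complex.add_re, Complex.ofReal_re, Complex.re_ofReal_mul]
    have hsw : s/2 * w.re ≤ s/2 := by
      have := mul_le_mul_of_nonneg_left hcross (by linarith : (0:ℝ) ≤ s/2)
      linarith
    nlinarith [mul_nonneg h1c ha, mul_nonneg h1c he, mul_nonneg hc0 ha]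
  have hne : S.Nonempty := ⟨_, hwit⟩
  have hba : BddAbove S := ⟨_, fun x hx => hbdd x hx⟩
  exact le_antisymm (csSup_le hne hbdd) (le_csSup hba hwit)
end
end

section
/- For c ∈ [0,1], the smallest eigenvalue of the partial transpose (ρ_c)^{T_B} of the maximally obese state ρ_c equals (c−1)/2; consequently the negativity satisfies N(ρ_c) = 1−c. -/
open Matrix Kronecker ComplexOrder

noncomputable section

set_option linter.unreachableTactic false in
set_option linter.unusedTactic false in
lemma rhoMax_ker_vec (c : ℝ) (hc : c ∈ Set.Icc (0:ℝ) 1) :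
    ∃ v : Fin 2 × Fin 2 → ℂ, v ≠ 0 ∧
      (ptB (rhoMax c) - (((c-1)/2 : ℝ) : ℂ) • 1) *ᵥ v = 0 := by
  have hs : ((Real.sqrt (1-c) : ℝ) : ℂ) * ((Real.sqrt (1-c) : ℝ) : ℂ) = 1 - (c:ℂ) := by
    rw [← Complex.ofReal_mul, Real.mul_self_sqrt (by linarith [hc.2])]
    push_cast; ring
  by_cases h1 : c = 1
  · refine ⟨fun p => if p = (1,1) then 1 else 0, ?_, ?_⟩
    · intro hv; have := congrFun hv (1,1); simp at this
    · funext p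
      fin_cases p <;>
        (simp only [mulVec, dotProduct, Fintype.sum_prod_type, Fin.sum_univ_two, ptB, rhoMax,
          Matrix.sub_apply, Matrix.smul_apply, Matrix.one_apply, Matrix.of_apply, Pi.zero_apply] <;>
         norm_num [Prod.ext_iff, h1])
  · refine ⟨fun p => if p = (0,0) then ((c:ℂ)-1) else if p = (1,1) then (Real.sqrt (1-c) : ℂ) else 0,
      ?_, ?_⟩
    · intro hv; have := congrFun hv (0,0); simp at this
      exact h1 (by exact_mod_cast sub_eq_zero.mp this)
    · funext p
      fin_cases p
      all_goals
        simp only [mulVec, dotProduct, Fintype.sum_prod_type, Fin.sum_univ_two, ptB, rhoMax,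
          Matrix.sub_apply, Matrix.smul_apply, Matrix.one_apply, Matrix.of_apply, Pi.zero_apply]
      all_goals norm_num [Prod.ext_iff]
      all_goals (first | ring1 | linear_combination hs/2 | linear_combination -hs/2)

lemma rhoMax_quad (c : ℝ) (hc : c ∈ Set.Icc (0:ℝ) 1) (x : Fin 2 × Fin 2 → ℂ) :
    (c-1)/2 * (star x ⬝ᵥ x).re ≤ (star x ⬝ᵥ (ptB (rhoMax c)) *ᵥ x).re := by
  have hs : Real.sqrt (1-c) ^ 2 = 1 - c := Real.sq_sqrt (by linarith [hc.2])
  simp only [dotProduct, mulVec, Fintype.sum_prod_type, Fin.sum_univ_two, ptB, rhoMax,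
    Matrix.of_apply, Pi.star_apply]
  norm_num [Prod.ext_iff]
  nlinarith [sq_nonneg ((x (0,0)).re + Real.sqrt (1-c) * (x (1,1)).re),
    sq_nonneg ((x (0,0)).im + Real.sqrt (1-c) * (x (1,1)).im),
    sq_nonneg (x (0,1)).re, sq_nonneg (x (0,1)).im,
    mul_nonneg (sub_nonneg.mpr hc.2) (sq_nonneg (x (1,0)).re),
    mul_nonneg (sub_nonneg.mpr hc.2) (sq_nonneg (x (1,0)).im),
    mul_nonneg hc.1 (sq_nonneg (x (0,1)).re),
    mul_nonneg hc.1 (sq_nonneg (x (0,1)).im), hs]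

/-- The smallest eigenvalue of the partial transpose of `ρ_c`
equals `(c−1)/2`; consequently the negativity `N(ρ_c) = max(0, −2μ_min)` equals `1−c`. -/
theorem rhoMax_negativity (c : ℝ) (hc : c ∈ Set.Icc (0 : ℝ) 1)
    (h : (ptB (rhoMax c)).IsHermitian) :
    (⨅ i, h.eigenvalues i) = (c - 1) / 2 ∧
    max 0 (-2 * ⨅ i, h.eigenvalues i) = 1 - c := by
  have hlow : ∀ i, (c-1)/2 ≤ h.eigenvalues i := by
    intro i
    have heq := h.eigenvalues_eq i
    have hnorm : (star ⇑(h.eigenvectorBasis i) ⬝ᵥ ⇑(h.eigenvectorBasis i)).re = 1 := by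
      have h1 : (inner ℂ (h.eigenvectorBasis i) (h.eigenvectorBasis i) : ℂ) =
          star ⇑(h.eigenvectorBasis i) ⬝ᵥ ⇑(h.eigenvectorBasis i) :=
        by rw [EuclideanSpace.inner_eq_star_dotProduct, dotProduct_comm]
      have h2 : (inner ℂ (h.eigenvectorBasis i) (h.eigenvectorBasis i) : ℂ) = 1 := by
        rw [inner_self_eq_norm_sq_to_K, h.eigenvectorBasis.orthonormal.1 i]
        norm_num
      rw [← h1, h2]; norm_num
    have hq := rhoMax_quad c hc ⇑(h.eigenvectorBasis i)
    rw [hnorm, mul_one] at hq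
    calc (c-1)/2 ≤ (star ⇑(h.eigenvectorBasis i) ⬝ᵥ ptB (rhoMax c) *ᵥ ⇑(h.eigenvectorBasis i)).re :=
          hq
      _ = h.eigenvalues i := by rw [heq]; rfl
  have hex : ∃ i, h.eigenvalues i = (c-1)/2 := by
    obtain ⟨v, hv0, hker⟩ := rhoMax_ker_vec c hc
    have hdet : (ptB (rhoMax c) - (((c-1)/2 : ℝ) : ℂ) • 1).det = 0 :=
      Matrix.exists_mulVec_eq_zero_iff.mp ⟨v, hv0, hker⟩
    have hUU : (h.eigenvectorUnitary : Matrix (Fin 2 × Fin 2) (Fin 2 × Fin 2) ℂ) *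
        star (h.eigenvectorUnitary : Matrix (Fin 2 × Fin 2) (Fin 2 × Fin 2) ℂ) = 1 :=
      Matrix.mem_unitaryGroup_iff.mp h.eigenvectorUnitary.2
    have hconj : ptB (rhoMax c) - (((c-1)/2 : ℝ) : ℂ) • 1 =
        (h.eigenvectorUnitary : Matrix (Fin 2 × Fin 2) (Fin 2 × Fin 2) ℂ) *
          Matrix.diagonal (fun i => ((h.eigenvalues i : ℂ) - (((c-1)/2 : ℝ) : ℂ))) *
          star (h.eigenvectorUnitary : Matrix (Fin 2 × Fin 2) (Fin 2 × Fin 2) ℂ) := by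
      conv_lhs => rw [h.spectral_theorem, Unitary.conjStarAlgAut_apply]
      have h1 : (((c-1)/2 : ℝ) : ℂ) • (1 : Matrix (Fin 2 × Fin 2) (Fin 2 × Fin 2) ℂ) =
          (h.eigenvectorUnitary : Matrix (Fin 2 × Fin 2) (Fin 2 × Fin 2) ℂ) *
            ((((c-1)/2 : ℝ) : ℂ) • 1) *
            star (h.eigenvectorUnitary : Matrix (Fin 2 × Fin 2) (Fin 2 × Fin 2) ℂ) := by
        rw [Matrix.mul_smul, Matrix.smul_mul, mul_one, hUU]
      rw [h1, ← Matrix.sub_mul, ← Matrix.mul_sub]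
      congr 2
      ext p q
      by_cases hpq : p = q <;>
        simp [Matrix.diagonal_apply, Matrix.one_apply, hpq, Function.comp]
    rw [hconj, Matrix.det_mul, Matrix.det_mul] at hdet
    have hUdet : ((h.eigenvectorUnitary : Matrix (Fin 2 × Fin 2) (Fin 2 × Fin 2) ℂ).det *
        (star (h.eigenvectorUnitary : Matrix (Fin 2 × Fin 2) (Fin 2 × Fin 2) ℂ)).det) = 1 := by
      rw [← Matrix.det_mul, hUU, Matrix.det_one]
    have hD : (Matrix.diagonal
        (fun i => ((h.eigenvalues i : ℂ) - (((c-1)/2 : ℝ) : ℂ)))).det = 0 := by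
      have h2 : ((h.eigenvectorUnitary : Matrix (Fin 2 × Fin 2) (Fin 2 × Fin 2) ℂ).det *
          (star (h.eigenvectorUnitary : Matrix (Fin 2 × Fin 2) (Fin 2 × Fin 2) ℂ)).det) *
          (Matrix.diagonal
            (fun i => ((h.eigenvalues i : ℂ) - (((c-1)/2 : ℝ) : ℂ)))).det = 0 := by
        linear_combination hdet
      rwa [hUdet, one_mul] at h2
    rw [Matrix.det_diagonal] at hD
    obtain ⟨i, -, hi⟩ := Finset.prod_eq_zero_iff.mp hD
    exact ⟨i, by exact_mod_cast sub_eq_zero.mp hi⟩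
  obtain ⟨i0, hi0⟩ := hex
  have hmin : (⨅ i, h.eigenvalues i) = (c-1)/2 := by
    apply le_antisymm
    · calc (⨅ i, h.eigenvalues i) ≤ h.eigenvalues i0 :=
            ciInf_le (Set.Finite.bddBelow (Set.finite_range _)) i0
        _ = (c-1)/2 := hi0
    · exact le_ciInf hlow
  refine ⟨hmin, ?_⟩
  rw [hmin, max_eq_right (by linarith [hc.2])]
  ring
end
end

section
/- For every c ∈ [0,1), the maximally obese state ρ_c is entangled, i.e. it is not separable: ρ_c cannot be written as a finite sum Σ_k A_k ⊗ B_k of Kronecker products of positive semidefinite 2×2 complex matrices A_k, B_k. -/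
open Matrix Kronecker ComplexOrder

noncomputable section

lemma kron_conjTranspose {m n p q : Type*} (A : Matrix m n ℂ) (B : Matrix p q ℂ) :
    (A ⊗ₖ B)ᴴ = Aᴴ ⊗ₖ Bᴴ := by
  ext ⟨i, j⟩ ⟨k, l⟩
  simp [conjTranspose_apply, kroneckerMap_apply, mul_comm]

lemma kron_psd {A B : Matrix (Fin 2) (Fin 2) ℂ} (hA : A.PosSemidef) (hB : B.PosSemidef) :
    (A ⊗ₖ B).PosSemidef := by
  exact hA.kronecker hB

/-- For `c ∈ [0,1)`, the maximally obese state `ρ_c` is not separable. -/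
theorem rhoMax_entangled (c : ℝ) (hc : c ∈ Set.Ico (0 : ℝ) 1) :
    ¬ ∃ (n : ℕ) (A B : Fin n → Matrix (Fin 2) (Fin 2) ℂ),
        (∀ k, (A k).PosSemidef) ∧ (∀ k, (B k).PosSemidef) ∧
        rhoMax c = ∑ k, A k ⊗ₖ B k := by
  obtain ⟨hc0, hc1⟩ := hc
  rintro ⟨n, A, B, hA, hB, hρ⟩
  set s : ℝ := Real.sqrt (1 - c) with hs
  have hs2 : s ^ 2 = 1 - c := Real.sq_sqrt (by linarith)
  have hspos : 0 < s := Real.sqrt_pos.mpr (by linarith)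
  set t : ℝ := -s / (c + 1) with ht
  -- key entrywise identity
  have key : ∀ a a' b b' : Fin 2,
      (∑ k, A k a a' * B k b b') = rhoMax c (a, b) (a', b') := by
    intro a a' b b'
    have := congrFun (congrFun hρ (a, b)) (a', b')
    simpa [Matrix.sum_apply, kroneckerMap_apply] using this.symm
  -- test vector
  set v : Fin 2 × Fin 2 → ℂ :=
    fun p => if p = (0, 0) then (t : ℂ) else if p = (1, 1) then 1 else 0 with hv
  -- nonnegativity of quadratic form of partial transpose
  have hQ : (0 : ℂ) ≤ ∑ k, star v ⬝ᵥ ((A k) ⊗ₖ (B k)ᵀ).mulVec v :=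
    Finset.sum_nonneg fun k _ => ((kron_psd (hA k) ((hB k).transpose)).dotProduct_mulVec_nonneg v)
  -- compute each term
  have hterm : ∀ k, star v ⬝ᵥ ((A k) ⊗ₖ (B k)ᵀ).mulVec v =
      (t : ℂ) * t * (A k 0 0 * B k 0 0) + (t : ℂ) * (A k 0 1 * B k 1 0)
      + (t : ℂ) * (A k 1 0 * B k 0 1) + (A k 1 1 * B k 1 1) := by
    intro k
    simp [dotProduct, mulVec, Fintype.sum_prod_type, Fin.sum_univ_two, hv,
      kroneckerMap_apply, transpose_apply, Prod.ext_iff]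
    ring
  have hsum : (∑ k, star v ⬝ᵥ ((A k) ⊗ₖ (B k)ᵀ).mulVec v)
      = (t : ℂ) * t * ((c : ℂ) / 2) + (t : ℂ) * ((s : ℂ) / 2)
        + (t : ℂ) * ((s : ℂ) / 2) + 0 := by
    simp only [hterm]
    rw [Finset.sum_add_distrib, Finset.sum_add_distrib, Finset.sum_add_distrib,
      ← Finset.mul_sum, ← Finset.mul_sum, ← Finset.mul_sum,
      key 0 0 0 0, key 0 1 1 0, key 1 0 0 1, key 1 1 1 1]
    norm_num [rhoMax, Prod.ext_iff, hs]
  rw [hsum] at hQ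
  have hcast : ((t * t * (c / 2) + t * (s / 2) + t * (s / 2) + 0 : ℝ) : ℂ)
      = (t : ℂ) * t * ((c : ℂ) / 2) + (t : ℂ) * ((s : ℂ) / 2)
        + (t : ℂ) * ((s : ℂ) / 2) + 0 := by push_cast; ring
  rw [← hcast] at hQ
  have hre : (0 : ℝ) ≤ t * t * (c / 2) + t * (s / 2) + t * (s / 2) + 0 := by
    exact_mod_cast hQ
  have hden : 0 < c + 1 := by linarith
  have h2 : 0 ≤ (t * t * (c / 2) + t * (s / 2) + t * (s / 2) + 0) * ((c + 1) ^ 2) :=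
    mul_nonneg hre (by positivity)
  have ht2 : t * (c + 1) = -s := by rw [ht]; field_simp
  have ht3 : (t * (c + 1)) ^ 2 = s ^ 2 := by rw [ht2]; ring
  nlinarith [h2, ht2, ht3, mul_pos hspos hspos, hc0]
end
end

section
/- For c ∈ [0,1], let K0 = [[1,0],[0,√(1−c)]] and K1 = [[0,√c],[0,0]] be 2×2 complex matrices, and let P = |ψ⁺⟩⟨ψ⁺| with |ψ⁺⟩ = (|01⟩+|10⟩)/√2 ∈ ℂ⁴. Then K0†K0 + K1†K1 = I₂ (so {K0, K1} are Kraus operators of a trace-preserving qubit channel, namely the amplitude-damping channel with decay probability c), and the maximally obese state satisfies ρ_c = (K0⊗I₂) P (K0⊗I₂)† + (K1⊗I₂) P (K1⊗I₂)†. In other words, ρ_c is Choi-isomorphic to the amplitude-damping channel with decay probability c. -/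
open Matrix Kronecker ComplexOrder

noncomputable section

private lemma sandwich_vecMulVec {n : Type*} [Fintype n] (A : Matrix n n ℂ) (u : n → ℂ) :
    A * Matrix.vecMulVec u (star u) * Aᴴ =
      Matrix.vecMulVec (A.mulVec u) (star (A.mulVec u)) := by
  ext p q
  simp only [Matrix.mul_apply, Matrix.vecMulVec_apply, Matrix.conjTranspose_apply,
    Matrix.mulVec, dotProduct, Pi.star_apply, Finset.sum_mul, Finset.mul_sum,
    star_sum, star_mul']
  refine Finset.sum_congr rfl fun j _ => Finset.sum_congr rfl fun i _ => ?_
  ring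

/-- `{K₀, K₁}` are Kraus operators of a trace-preserving channel
(the amplitude-damping channel with decay probability `c`), and `ρ_c` is its Choi state:
`ρ_c = (K₀⊗I)|ψ⁺⟩⟨ψ⁺|(K₀⊗I)† + (K₁⊗I)|ψ⁺⟩⟨ψ⁺|(K₁⊗I)†`. -/
theorem rhoMax_choi_amplitude_damping (c : ℝ) (hc : c ∈ Set.Icc (0 : ℝ) 1)
    (K0 K1 : Matrix (Fin 2) (Fin 2) ℂ)
    (hK0 : K0 = !![1, 0; 0, (Real.sqrt (1 - c) : ℂ)])
    (hK1 : K1 = !![0, (Real.sqrt c : ℂ); 0, 0])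
    (ψ : Fin 2 × Fin 2 → ℂ)
    (hψ : ψ = fun p => if p = ((0 : Fin 2), (1 : Fin 2)) ∨ p = (1, 0) then
      ((1 / Real.sqrt 2 : ℝ) : ℂ) else 0) :
    K0ᴴ * K0 + K1ᴴ * K1 = 1 ∧
    rhoMax c =
      (K0 ⊗ₖ (1 : Matrix (Fin 2) (Fin 2) ℂ)) * Matrix.vecMulVec ψ (star ψ) *
        (K0 ⊗ₖ (1 : Matrix (Fin 2) (Fin 2) ℂ))ᴴ +
      (K1 ⊗ₖ (1 : Matrix (Fin 2) (Fin 2) ℂ)) * Matrix.vecMulVec ψ (star ψ) *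
        (K1 ⊗ₖ (1 : Matrix (Fin 2) (Fin 2) ℂ))ᴴ := by

  obtain ⟨hc0, hc1⟩ := hc
  have h1c : (Real.sqrt (1 - c) : ℂ) * (Real.sqrt (1 - c) : ℂ) = 1 - (c : ℂ) := by
    rw [← Complex.ofReal_mul, Real.mul_self_sqrt (by linarith)]; push_cast; ring
  have hcc : (Real.sqrt c : ℂ) * (Real.sqrt c : ℂ) = (c : ℂ) := by
    rw [← Complex.ofReal_mul, Real.mul_self_sqrt hc0]
  have h2 : ((1 / Real.sqrt 2 : ℝ) : ℂ) * ((1 / Real.sqrt 2 : ℝ) : ℂ) = 1 / 2 := by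
    rw [← Complex.ofReal_mul,
      show (1 / Real.sqrt 2) * (1 / Real.sqrt 2) = 1 / (Real.sqrt 2 * Real.sqrt 2) by ring,
      Real.mul_self_sqrt (by norm_num)]
    norm_num
  have h2' : (((Real.sqrt 2 : ℝ) : ℂ))⁻¹ * (((Real.sqrt 2 : ℝ) : ℂ))⁻¹ = 1 / 2 := by
    rw [← mul_inv, ← Complex.ofReal_mul, Real.mul_self_sqrt (by norm_num)]
    norm_num
  have hsq2 : (((Real.sqrt 2 : ℝ)) : ℂ) ^ 2 = 2 := by
    rw [sq, ← Complex.ofReal_mul, Real.mul_self_sqrt (by norm_num)]; norm_num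
  have h2i : ((((Real.sqrt 2 : ℝ)) : ℂ))⁻¹ ^ 2 = 1 / 2 := by
    rw [inv_pow, hsq2]; norm_num
  have hccsq : (Real.sqrt c : ℂ) ^ 2 = (c : ℂ) := by rw [sq, hcc]
  have h1csq : (Real.sqrt (1 - c) : ℂ) ^ 2 = 1 - (c : ℂ) := by rw [sq, h1c]
  refine ⟨?_, ?_⟩
  · subst hK0 hK1
    ext i j
    fin_cases i <;> fin_cases j <;>
      simp [Matrix.mul_apply, Fin.sum_univ_succ, Matrix.one_apply, h1c, hcc]
  · rw [sandwich_vecMulVec, sandwich_vecMulVec]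
    set s : ℂ := ((1 / Real.sqrt 2 : ℝ) : ℂ) with hs
    have hw0 : (K0 ⊗ₖ (1 : Matrix (Fin 2) (Fin 2) ℂ)).mulVec ψ =
        fun p => if p = ((0 : Fin 2), (1 : Fin 2)) then s
          else if p = (1, 0) then (Real.sqrt (1 - c) : ℂ) * s else 0 := by
      subst hK0 hψ
      funext ⟨a, b⟩
      fin_cases a <;> fin_cases b <;>
        simp [Matrix.mulVec, dotProduct, Fintype.sum_prod_type, Fin.sum_univ_two,
          Matrix.kroneckerMap_apply, Matrix.one_apply, hs, Prod.ext_iff]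
    have hw1 : (K1 ⊗ₖ (1 : Matrix (Fin 2) (Fin 2) ℂ)).mulVec ψ =
        fun p => if p = ((0 : Fin 2), (0 : Fin 2)) then (Real.sqrt c : ℂ) * s else 0 := by
      subst hK1 hψ
      funext ⟨a, b⟩
      fin_cases a <;> fin_cases b <;>
        simp [Matrix.mulVec, dotProduct, Fintype.sum_prod_type, Fin.sum_univ_two,
          Matrix.kroneckerMap_apply, Matrix.one_apply, hs, Prod.ext_iff]
    rw [hw0, hw1]
    ext ⟨a, b⟩ ⟨a', b'⟩
    fin_cases a <;> fin_cases b <;> fin_cases a' <;> fin_cases b' <;>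
      simp [rhoMax, Matrix.vecMulVec_apply, hs, h2', h1c, hcc, Prod.ext_iff] <;>
      ring_nf <;>
      simp [h1c, hcc, h2', hs, Prod.ext_iff] <;> ring_nf <;>
      simp [hsq2, h2i, hccsq, h1csq] <;> ring_nf
end
end
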